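/- arXiv:2306.00336 — 3 statements merged into one kernel-verified Lean document; each statement's English description precedes it below -/
import Mathlib

section
/- Let w be an element of S_infty and let n be a positive integer. If a = (a^1,...,a^n) in RF_n(w) satisfies e_i(a) = 0 for all i in {1,...,n-1}, then a is bounded by the standard flag, i.e., every letter m appearing in the factor a^i satisfies m >= i; equivalently, a belongs to BRF_n(w). -/
open MvPolynomial

/-! ### Permutations of ℤ, reduced words -/

/-- The simple transposition `s_i = (i, i+1)` of `ℤ`. -/
def sT (i : ℤ) : Equiv.Perm ℤ := Equiv.swap i (i + 1)

/-- The product `s_{i_1} s_{i_2} ⋯ s_{i_l}` of the simple transpositions indexed by a word. -/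
def wordProd (l : List ℤ) : Equiv.Perm ℤ := (l.map sT).prod

/-- `S_ℤ`: the subgroup of permutations of `ℤ` generated by the simple transpositions. -/
def SZSet : Set (Equiv.Perm ℤ) := {w | ∃ l : List ℤ, wordProd l = w}

/-- `S_∞`: the subgroup generated by `s_i` for `i ≥ 1`. -/
def SinftySet : Set (Equiv.Perm ℤ) :=
  {w | ∃ l : List ℤ, (∀ i ∈ l, 1 ≤ i) ∧ wordProd l = w}

/-- `S_n`: the subgroup generated by `s_i` for `1 ≤ i ≤ n-1`. -/
def SnSet (n : ℕ) : Set (Equiv.Perm ℤ) :=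
  {w | ∃ l : List ℤ, (∀ i ∈ l, 1 ≤ i ∧ i < n) ∧ wordProd l = w}

/-- A reduced word for `w`: a minimal length word whose product is `w`. -/
def IsReducedWord (w : Equiv.Perm ℤ) (l : List ℤ) : Prop :=
  wordProd l = w ∧ ∀ m : List ℤ, wordProd m = w → l.length ≤ m.length

/-- The Coxeter length of `w` (the length of any reduced word for `w`). -/
noncomputable def lenOf (w : Equiv.Perm ℤ) : ℕ :=
  sInf {m | ∃ l : List ℤ, wordProd l = w ∧ l.length = m}

/-- The inversion set `Inv(w) = {(a,b) : a < b, w(a) > w(b)}`. -/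
def InvSet (w : Equiv.Perm ℤ) : Set (ℤ × ℤ) := {p | p.1 < p.2 ∧ w p.2 < w p.1}

/-- The Lehmer code `c_i(w) = #{j : i < j, w(i) > w(j)}`. -/
noncomputable def codeOf (w : Equiv.Perm ℤ) (i : ℤ) : ℕ := {j : ℤ | i < j ∧ w j < w i}.ncard

/-- The Rothe diagram `D(w) = {(i, w(j)) : i < j, w(i) > w(j)}`. -/
def RotheD (w : Equiv.Perm ℤ) : Set (ℤ × ℤ) :=
  {p | ∃ j : ℤ, p.1 < j ∧ w j < w p.1 ∧ p.2 = w j}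

/-! ### Primed letters and primed words -/

/-- A primed letter: `(x, false)` denotes the integer `x`, `(x, true)` denotes `x' = x - 1/2`. -/
abbrev PLetter := ℤ × Bool

/-- Twice the value of a primed letter (so that comparisons agree with `1' < 1 < 2' < 2 < ⋯`). -/
def pval (p : PLetter) : ℤ := 2 * p.1 - (if p.2 then 1 else 0)

/-- A strictly decreasing primed word. -/
def PDec (l : List PLetter) : Prop := l.Pairwise (fun p q => pval q < pval p)

/-- A strictly decreasing integer word. -/
def ZDec (l : List ℤ) : Prop := l.Pairwise (fun x y => y < x)

/-- Remove the primes from a primed word (the "ceiling"). -/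
def unprimeW (l : List PLetter) : List ℤ := l.map Prod.fst

/-- Membership in `R⁺(w)`: a primed word whose unprimed form is a reduced word for `w`. -/
def IsPrimedReducedWord (w : Equiv.Perm ℤ) (l : List PLetter) : Prop :=
  IsReducedWord w (unprimeW l)

/-- The set `Marked(i)` of marked inversions of a primed word. -/
def markedSet (l : List PLetter) : Set (ℤ × ℤ) :=
  {p | ∃ j : Fin l.length, (l.get j).2 = true ∧
        p.1 = wordProd ((l.drop ((j : ℕ) + 1)).reverse.map Prod.fst) (l.get j).1 ∧
        p.2 = wordProd ((l.drop ((j : ℕ) + 1)).reverse.map Prod.fst) ((l.get j).1 + 1)}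

/-! ### Factorizations (as sequences of factors) -/

/-- The concatenation of the first `N` factors of a factorization. -/
def concatP (a : ℕ → List PLetter) (N : ℕ) : List PLetter := ((List.range N).map a).flatten

/-- The concatenation of the first `N` factors of an unprimed factorization. -/
def concatZ (a : ℕ → List ℤ) (N : ℕ) : List ℤ := ((List.range N).map a).flatten

/-- `RF⁺(w, A)`: decreasing primed reduced factorizations of `w` with marked set `A`
(all but finitely many factors empty). -/
def RFplus (w : Equiv.Perm ℤ) (A : Set (ℤ × ℤ)) : Set (ℕ → List PLetter) :=
  {a | (∀ i, PDec (a i)) ∧ ∃ N : ℕ, (∀ m, N ≤ m → a m = []) ∧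
        IsPrimedReducedWord w (concatP a N) ∧ markedSet (concatP a N) = A}

/-- `RF⁺_n(w, A)`: elements of `RF⁺(w, A)` with all factors beyond the first `n` empty. -/
def RFplusN (n : ℕ) (w : Equiv.Perm ℤ) (A : Set (ℤ × ℤ)) : Set (ℕ → List PLetter) :=
  {a | (∀ i, PDec (a i)) ∧ (∀ m, n ≤ m → a m = []) ∧
        IsPrimedReducedWord w (concatP a n) ∧ markedSet (concatP a n) = A}

/-- `RF_n(w)`: unprimed decreasing reduced factorizations of `w` into at most `n` factors. -/
def RFZn (n : ℕ) (w : Equiv.Perm ℤ) : Set (ℕ → List ℤ) :=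
  {a | (∀ i, ZDec (a i)) ∧ (∀ m, n ≤ m → a m = []) ∧ IsReducedWord w (concatZ a n)}

/-- Removing the primes from each factor of a primed factorization. -/
def unprimeF (a : ℕ → List PLetter) : ℕ → List ℤ := fun m => unprimeW (a m)

/-! ### The pairing procedure and crystal operators (primed version) -/

/-- Find the first letter `b` in the (decreasing) list with `⌈b⌉ < c`, removing it. -/
def findPairP (c : ℤ) : List PLetter → Option PLetter × List PLetter
  | [] => (none, [])
  | b :: rest =>
      if b.1 < c then (some b, rest)
      else
        let r := findPairP c rest
        (r.1, b :: r.2)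

/-- Iterate the pairing over the letters of `v` from right to left. -/
def pairFoldP (u : List PLetter) (vrev : List PLetter) :
    List (PLetter × PLetter) × List PLetter :=
  vrev.foldl (fun st c =>
    match findPairP c.1 st.2 with
    | (none, r) => (st.1, r)
    | (some b, r) => ((b, c) :: st.1, r)) ([], u)

/-- The set `pair(u, v)` of paired letters, as a list of pairs. -/
def pairsP (u v : List PLetter) : List (PLetter × PLetter) := (pairFoldP u v.reverse).1

/-- The unpaired letters of `v` (in decreasing order). -/
def unpairedSnd (u v : List PLetter) : List PLetter :=
  v.filter fun c => decide (c ∉ (pairsP u v).map Prod.snd)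

/-- The unpaired letters of `u` (in decreasing order). -/
def unpairedFst (u v : List PLetter) : List PLetter :=
  u.filter fun b => decide (b ∉ (pairsP u v).map Prod.fst)

theorem exists_add_not_mem (L : List ℤ) (x : ℤ) : ∃ q : ℕ, x + q ∉ L := by
  have h : ∃ q : ℕ, ∀ y ∈ L, y < x + q := by
    induction L with
    | nil => exact ⟨1, by simp⟩
    | cons a t ih =>
      obtain ⟨q, hq⟩ := ih
      refine ⟨q + (a - x).toNat + 1, ?_⟩
      intro y hy
      rcases List.mem_cons.mp hy with rfl | h
      · push_cast; omega
      · have := hq y h; push_cast; omega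
  obtain ⟨q, hq⟩ := h
  exact ⟨q, fun hmem => lt_irrefl _ (hq _ hmem)⟩

theorem exists_sub_not_mem (L : List ℤ) (x : ℤ) : ∃ q : ℕ, x - q ∉ L := by
  have h : ∃ q : ℕ, ∀ y ∈ L, x - q < y := by
    induction L with
    | nil => exact ⟨1, by simp⟩
    | cons a t ih =>
      obtain ⟨q, hq⟩ := ih
      refine ⟨q + (x - a).toNat + 1, ?_⟩
      intro y hy
      rcases List.mem_cons.mp hy with rfl | h
      · push_cast; omega
      · have := hq y h; push_cast; omega
  obtain ⟨q, hq⟩ := h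
  exact ⟨q, fun hmem => lt_irrefl _ (hq _ hmem)⟩

/-- The minimal `q ∈ ℕ` with `x + q ∉ L`. -/
def qUp (L : List ℤ) (x : ℤ) : ℕ := Nat.find (exists_add_not_mem L x)

/-- The minimal `q ∈ ℕ` with `x - q ∉ L`. -/
def qDown (L : List ℤ) (x : ℤ) : ℕ := Nat.find (exists_sub_not_mem L x)

/-- Reverse the prime on a primed letter. -/
def toggleP (p : PLetter) : PLetter := (p.1, !p.2)

/-- Toggle the prime on the occurrence of the letter `p` in a primed word. -/
def toggleIn (l : List PLetter) (p : PLetter) : List PLetter :=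
  l.map fun q => if q = p then toggleP q else q

/-- Swap the primes on a pair `(b, c)` with `b` in the first word and `c` in the second:
reverse both primes when exactly one of the two letters is primed. -/
def swapPairIn (uv : List PLetter × List PLetter) (bc : PLetter × PLetter) :
    List PLetter × List PLetter :=
  if bc.1.2 = bc.2.2 then uv else (toggleIn uv.1 bc.1, toggleIn uv.2 bc.2)

/-- Insert a letter into a decreasing primed word at the correct position. -/
def insertDecP (p : PLetter) : List PLetter → List PLetter
  | [] => [p]
  | q :: t => if pval q < pval p then p :: q :: t else q :: insertDecP p t

/-- The raising crystal operator acting on a consecutive pair of factors (primed version). -/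
def eStepP (u v : List PLetter) : Option (List PLetter × List PLetter) :=
  match unpairedSnd u v with
  | [] => none
  | x :: _ =>
    let q : ℕ := qUp (unprimeW u) x.1
    let toSwap := (pairsP u v).filter fun bc => decide (x.1 < bc.2.1 ∧ bc.2.1 ≤ x.1 + q)
    some (toSwap.foldl swapPairIn (insertDecP (x.1 + q, x.2) u, v.erase x))

/-- The lowering crystal operator acting on a consecutive pair of factors (primed version). -/
def fStepP (u v : List PLetter) : Option (List PLetter × List PLetter) :=
  match (unpairedFst u v).getLast? with
  | none => none
  | some y =>
    let q : ℕ := qDown (unprimeW v) y.1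
    let toSwap := (pairsP u v).filter fun bc => decide (y.1 - q ≤ bc.1.1 ∧ bc.1.1 < y.1)
    some (toSwap.foldl swapPairIn (u.erase y, insertDecP (y.1 - q, y.2) v))

/-- Apply a two-factor operator at position `(i, i+1)` of a factorization. -/
def applyAtP (g : List PLetter → List PLetter → Option (List PLetter × List PLetter))
    (i : ℕ) (a : ℕ → List PLetter) : Option (ℕ → List PLetter) :=
  (g (a i) (a (i + 1))).map fun uv =>
    Function.update (Function.update a i uv.1) (i + 1) uv.2

/-- The crystal operator `e` on primed factorizations acting on factors `i, i+1` (0-indexed). -/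
def eP (i : ℕ) (a : ℕ → List PLetter) : Option (ℕ → List PLetter) := applyAtP eStepP i a

/-- The crystal operator `f` on primed factorizations acting on factors `i, i+1` (0-indexed). -/
def fP (i : ℕ) (a : ℕ → List PLetter) : Option (ℕ → List PLetter) := applyAtP fStepP i a

/-! ### Crystal operators (unprimed version) -/

def findPairZ (c : ℤ) : List ℤ → Option ℤ × List ℤ
  | [] => (none, [])
  | b :: rest =>
      if b < c then (some b, rest)
      else
        let r := findPairZ c rest
        (r.1, b :: r.2)

def pairFoldZ (u : List ℤ) (vrev : List ℤ) : List (ℤ × ℤ) × List ℤ :=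
  vrev.foldl (fun st c =>
    match findPairZ c st.2 with
    | (none, r) => (st.1, r)
    | (some b, r) => ((b, c) :: st.1, r)) ([], u)

/-- The set `pair(u, v)` for integer words. -/
def pairsZ (u v : List ℤ) : List (ℤ × ℤ) := (pairFoldZ u v.reverse).1

def insertDecZ (x : ℤ) : List ℤ → List ℤ
  | [] => [x]
  | q :: t => if q < x then x :: q :: t else q :: insertDecZ x t

/-- The raising crystal operator on a consecutive pair of integer factors. -/
def eStepZ (u v : List ℤ) : Option (List ℤ × List ℤ) :=
  match v.filter (fun c => decide (c ∉ (pairsZ u v).map Prod.snd)) with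
  | [] => none
  | x :: _ =>
    let q : ℕ := qUp u x
    some (insertDecZ (x + q) u, v.erase x)

/-- The lowering crystal operator on a consecutive pair of integer factors. -/
def fStepZ (u v : List ℤ) : Option (List ℤ × List ℤ) :=
  match (u.filter (fun b => decide (b ∉ (pairsZ u v).map Prod.fst))).getLast? with
  | none => none
  | some y =>
    let q : ℕ := qDown v y
    some (u.erase y, insertDecZ (y - q) v)

def applyAtZ (g : List ℤ → List ℤ → Option (List ℤ × List ℤ))
    (i : ℕ) (a : ℕ → List ℤ) : Option (ℕ → List ℤ) :=
  (g (a i) (a (i + 1))).map fun uv =>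
    Function.update (Function.update a i uv.1) (i + 1) uv.2

/-- The crystal operator `e` acting on factors `i, i+1` (0-indexed) of an integer factorization,
so that `eZ i` is the paper's `e_{i+1}`. -/
def eZ (i : ℕ) (a : ℕ → List ℤ) : Option (ℕ → List ℤ) := applyAtZ eStepZ i a

/-- The crystal operator `f` acting on factors `i, i+1` (0-indexed). -/
def fZ (i : ℕ) (a : ℕ → List ℤ) : Option (ℕ → List ℤ) := applyAtZ fStepZ i a

/-! ### Coxeter–Knuth equivalence and tableaux -/

/-- One elementary Coxeter–Knuth move. -/
inductive CKStep : List ℤ → List ℤ → Prop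
  | acb (u v : List ℤ) {a b c : ℤ} (h1 : a < b) (h2 : b < c) :
      CKStep (u ++ a :: c :: b :: v) (u ++ c :: a :: b :: v)
  | bca (u v : List ℤ) {a b c : ℤ} (h1 : a < b) (h2 : b < c) :
      CKStep (u ++ b :: c :: a :: v) (u ++ b :: a :: c :: v)
  | braid (u v : List ℤ) {a b : ℤ} (h : b = a + 1 ∨ b = a - 1) :
      CKStep (u ++ a :: b :: a :: v) (u ++ b :: a :: b :: v)

/-- Coxeter–Knuth equivalence. -/
def CKEquiv : List ℤ → List ℤ → Prop := Relation.EqvGen CKStep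

/-- A tableau is recorded as its list of rows; its shape is the list of row lengths. -/
def shapeOf (T : List (List ℤ)) : List ℕ := T.map List.length

/-- The row reading word: rows left to right, starting with the last row. -/
def rowword (T : List (List ℤ)) : List ℤ := T.reverse.flatten

/-- The reverse row reading word. -/
def revrow (T : List (List ℤ)) : List ℤ := (rowword T).reverse

/-- The entry of `T` in row `i`, position `j` within the row (both 0-indexed). -/
def entryOf (T : List (List ℤ)) (i j : ℕ) : ℤ := (T.getD i []).getD j 0

/-- `T` has partition shape: rows nonempty with weakly decreasing lengths. -/
def IsPartShape (T : List (List ℤ)) : Prop :=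
  (∀ r ∈ T, r ≠ []) ∧ ∀ i, i + 1 < T.length → (T.getD (i + 1) []).length ≤ (T.getD i []).length

/-- An increasing tableau of partition shape. -/
def IncrTab (T : List (List ℤ)) : Prop :=
  IsPartShape T ∧ (∀ r ∈ T, r.Pairwise (· < ·)) ∧
  ∀ i j, i + 1 < T.length → j < (T.getD (i + 1) []).length → entryOf T i j < entryOf T (i + 1) j

/-- A decreasing tableau of partition shape. -/
def DecrTab (T : List (List ℤ)) : Prop :=
  IsPartShape T ∧ (∀ r ∈ T, r.Pairwise (fun x y => y < x)) ∧
  ∀ i j, i + 1 < T.length → j < (T.getD (i + 1) []).length → entryOf T (i + 1) j < entryOf T i j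

/-! ### Shifted tableaux -/

/-- Strict partition shape: rows nonempty with strictly decreasing lengths.  Row `i`
(0-indexed) of a shifted tableau occupies columns `i, i+1, …`. -/
def IsStrictShape (T : List (List ℤ)) : Prop :=
  (∀ r ∈ T, r ≠ []) ∧ ∀ i, i + 1 < T.length → (T.getD (i + 1) []).length < (T.getD i []).length

/-- An increasing shifted tableau: rows and columns strictly increase.  In row-list
coordinates, the entry of row `i+1` in within-row position `j` lies in the same column as the
entry of row `i` in within-row position `j+1`. -/
def ShIncrTab (T : List (List ℤ)) : Prop :=
  IsStrictShape T ∧ (∀ r ∈ T, r.Pairwise (· < ·)) ∧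
  ∀ i j, i + 1 < T.length → j < (T.getD (i + 1) []).length →
    entryOf T i (j + 1) < entryOf T (i + 1) j

/-- A decreasing shifted tableau. -/
def ShDecrTab (T : List (List ℤ)) : Prop :=
  IsStrictShape T ∧ (∀ r ∈ T, r.Pairwise (fun x y => y < x)) ∧
  ∀ i j, i + 1 < T.length → j < (T.getD (i + 1) []).length →
    entryOf T (i + 1) j < entryOf T i (j + 1)

/-! ### Young diagrams of partitions given as lists -/

/-- The Young diagram of a partition given as a list of row lengths (1-indexed positions). -/
def YDiagL (lam : List ℕ) : Set (ℤ × ℤ) :=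
  {p | 1 ≤ p.1 ∧ 1 ≤ p.2 ∧ p.2 ≤ (lam.getD (p.1 - 1).toNat 0 : ℤ)}

/-- The tableau `T_λ` with entry `i + j - 1` in each box `(i, j)` of `D_λ` (1-indexed). -/
def Tlam (lam : List ℕ) : List (List ℤ) :=
  lam.mapIdx fun i k => (List.range k).map fun j => ((i + j + 1 : ℕ) : ℤ)

/-! ### Fixed-point-free involutions -/

def fpfFun (i : ℤ) : ℤ := if Even i then i - 1 else i + 1

theorem fpfFun_involutive : Function.Involutive fpfFun := by
  intro i
  simp only [fpfFun, Int.even_iff]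
  split <;> split <;> omega

/-- The fixed-point-free involution `1_fpf : i ↦ i - (-1)^i`. -/
def onefpf : Equiv.Perm ℤ :=
  ⟨fpfFun, fpfFun, fpfFun_involutive, fpfFun_involutive⟩

/-- `I^fpf_ℤ`: the `S_ℤ`-conjugation orbit of `1_fpf`. -/
def IfpfZ : Set (Equiv.Perm ℤ) := {z | ∃ w ∈ SZSet, z = w⁻¹ * onefpf * w}

/-- `I^fpf_∞`: the `S_∞`-conjugation orbit of `1_fpf`. -/
def IfpfInfty : Set (Equiv.Perm ℤ) := {z | ∃ w ∈ SinftySet, z = w⁻¹ * onefpf * w}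

/-- `𝒜^Sp(z)`: minimal-length `w ∈ S_ℤ` with `z = w⁻¹ 1_fpf w`. -/
def ASp (z : Equiv.Perm ℤ) : Set (Equiv.Perm ℤ) :=
  {w | w ∈ SZSet ∧ z = w⁻¹ * onefpf * w ∧
       ∀ v ∈ SZSet, z = v⁻¹ * onefpf * v → lenOf w ≤ lenOf v}

/-- `R^Sp(z)`: the set of fpf-involution words for `z`. -/
def RSp (z : Equiv.Perm ℤ) : Set (List ℤ) := {l | ∃ w ∈ ASp z, IsReducedWord w l}

/-- The fpf-involution code `c^Sp_i(z)`. -/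
noncomputable def cSp (z : Equiv.Perm ℤ) (i : ℤ) : ℕ :=
  {j : ℤ | i < j ∧ z j < min i (z i)}.ncard

/-- `RF^Sp_n(z)`: symplectic reduced factorizations into at most `n` decreasing factors. -/
def RFSp (n : ℕ) (z : Equiv.Perm ℤ) : Set (ℕ → List ℤ) :=
  {a | (∀ i, ZDec (a i)) ∧ (∀ m, n ≤ m → a m = []) ∧ concatZ a n ∈ RSp z}

/-- `BRF^Sp_n(z)`: the bounded (by the standard flag) symplectic reduced factorizations:
every letter `m` of the factor in (0-indexed) position `i` satisfies `m ≥ i + 1`. -/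
def BRFSp (n : ℕ) (z : Equiv.Perm ℤ) : Set (ℕ → List ℤ) :=
  {a | a ∈ RFSp n z ∧ ∀ m, ∀ x ∈ a m, (m : ℤ) + 1 ≤ x}

/-! ### Symplectic Coxeter–Knuth equivalence -/

/-- The extra symplectic relations, affecting the first two letters. -/
inductive SpExtra : List ℤ → List ℤ → Prop
  | down (a : ℤ) (t : List ℤ) : SpExtra (a :: (a - 1) :: t) (a :: (a + 1) :: t)
  | comm (a b : ℤ) (t : List ℤ) (h : a % 2 = b % 2) : SpExtra (a :: b :: t) (b :: a :: t)

/-- Symplectic Coxeter–Knuth equivalence. -/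
def SpCKEquiv : List ℤ → List ℤ → Prop :=
  Relation.EqvGen (fun x y => CKStep x y ∨ SpExtra x y)

/-- `half_<(λ)` for a partition given as a list: positive values among `λ_i - i`. -/
def halfLtL (lam : List ℕ) : List ℕ :=
  ((List.range lam.length).map fun k => ((lam.getD k 0 : ℤ) - (k + 1)).toNat).filter
    fun m => decide (0 < m)

/-- The shifted tableau `T^Sp_λ` of shape `half_<(λ)` with entry `i + j` in box `(i,j) ∈ SD_μ`. -/
def TSpTab (lam : List ℕ) : List (List ℤ) :=
  (halfLtL lam).mapIdx fun k m => (List.range m).map fun t => ((2 * (k + 1) + t : ℕ) : ℤ)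

/-- Symmetric partition (list version): the diagram is invariant under transposition. -/
def SymmPartL (lam : List ℕ) : Prop :=
  ∀ p : ℤ × ℤ, p ∈ YDiagL lam ↔ (p.2, p.1) ∈ YDiagL lam

/-- Skew-symmetric partition (list version). -/
def SkewSymmPartL (lam : List ℕ) : Prop :=
  SymmPartL lam ∧ ∀ i : ℤ, (i, i) ∈ YDiagL lam → (i + 1, i + 1) ∉ YDiagL lam →
    (¬ ∃ mu : List ℕ, mu.Pairwise (· ≥ ·) ∧ YDiagL mu = YDiagL lam ∪ {(i, i + 1)} ∧
        YDiagL mu ≠ YDiagL lam) ∧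
    (¬ ∃ mu : List ℕ, mu.Pairwise (· ≥ ·) ∧ YDiagL mu = YDiagL lam \ {(i, i + 1)} ∧
        YDiagL mu ≠ YDiagL lam)

/-! ### Demazure product, orthogonal involution words -/

/-- One step of the Demazure product: multiply by `s_i` on the left if this increases length. -/
noncomputable def demStep (i : ℤ) (x : Equiv.Perm ℤ) : Equiv.Perm ℤ :=
  if lenOf x < lenOf (sT i * x) then sT i * x else x

/-- The Demazure product of the letters of a word. -/
noncomputable def demWordProd (l : List ℤ) : Equiv.Perm ℤ := l.foldr demStep 1

/-- `𝒜^O(z)`: minimal-length `w` with `z = w⁻¹ ∘ w` (Demazure product). -/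
def AO (z : Equiv.Perm ℤ) : Set (Equiv.Perm ℤ) :=
  {w | (∃ l : List ℤ, IsReducedWord w l ∧ demWordProd (l.reverse ++ l) = z) ∧
       ∀ v : Equiv.Perm ℤ, (∃ l : List ℤ, IsReducedWord v l ∧ demWordProd (l.reverse ++ l) = z) →
         lenOf w ≤ lenOf v}

/-- `Cyc(z) = {(a, b) : a < b = z(a)}`. -/
def CycSet (z : Equiv.Perm ℤ) : Set (ℤ × ℤ) := {p | p.1 < p.2 ∧ z p.1 = p.2}

/-- `R^O(z)`: the set of primed involution words for `z`. -/
def RO (z : Equiv.Perm ℤ) : Set (List PLetter) :=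
  {l | ∃ A ⊆ CycSet z, ∃ w ∈ AO z, IsPrimedReducedWord w l ∧ markedSet l = A}

/-- The involution code `c^O_i(z)`. -/
noncomputable def cO (z : Equiv.Perm ℤ) (i : ℤ) : ℕ :=
  {j : ℤ | i < j ∧ z j ≤ min i (z i)}.ncard

/-- `RF^O_n(z)`: orthogonal (primed) reduced factorizations into at most `n` factors. -/
def RFO (n : ℕ) (z : Equiv.Perm ℤ) : Set (ℕ → List PLetter) :=
  {a | (∀ i, PDec (a i)) ∧ (∀ m, n ≤ m → a m = []) ∧ concatP a n ∈ RO z}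

/-- The unprimed image `uRF^O_n(z)` of `RF^O_n(z)`. -/
def uRFO (n : ℕ) (z : Equiv.Perm ℤ) : Set (ℕ → List ℤ) := unprimeF '' RFO n z

/-! ### Primed and orthogonal Coxeter–Knuth equivalence -/

/-- One elementary primed Coxeter–Knuth move. -/
inductive PCKStep : List PLetter → List PLetter → Prop
  | swapACB (u v : List PLetter) {A B C : PLetter} (h1 : A.1 < B.1) (h2 : B.1 < C.1) :
      PCKStep (u ++ A :: C :: B :: v) (u ++ C :: A :: B :: v)
  | swapBCA (u v : List PLetter) {A B C : PLetter} (h1 : A.1 < B.1) (h2 : B.1 < C.1) :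
      PCKStep (u ++ B :: C :: A :: v) (u ++ B :: A :: C :: v)
  | braid00 (u v : List PLetter) {a b : ℤ} (h : b = a + 1 ∨ b = a - 1) :
      PCKStep (u ++ (a, false) :: (b, false) :: (a, false) :: v)
              (u ++ (b, false) :: (a, false) :: (b, false) :: v)
  | braid11 (u v : List PLetter) {a b : ℤ} (h : b = a + 1 ∨ b = a - 1) :
      PCKStep (u ++ (a, true) :: (b, true) :: (a, true) :: v)
              (u ++ (b, true) :: (a, true) :: (b, true) :: v)
  | mixA (u v : List PLetter) {a b : ℤ} (h : b = a + 1 ∨ b = a - 1) :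
      PCKStep (u ++ (a, true) :: (b, false) :: (a, false) :: v)
              (u ++ (b, false) :: (a, false) :: (b, true) :: v)
  | mixB (u v : List PLetter) {a b : ℤ} (h : b = a + 1 ∨ b = a - 1) :
      PCKStep (u ++ (a, false) :: (b, true) :: (a, false) :: v)
              (u ++ (b, false) :: (a, true) :: (b, false) :: v)
  | mixC (u v : List PLetter) {a b : ℤ} (h : b = a + 1 ∨ b = a - 1) :
      PCKStep (u ++ (a, true) :: (b, true) :: (a, false) :: v)
              (u ++ (b, false) :: (a, true) :: (b, true) :: v)
  | mixD (u v : List PLetter) {a b : ℤ} (h : b = a + 1 ∨ b = a - 1) :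
      PCKStep (u ++ (a, true) :: (b, false) :: (a, true) :: v)
              (u ++ (b, true) :: (a, false) :: (b, true) :: v)

/-- The extra orthogonal relations, affecting the first letters of words. -/
inductive OExtra : List PLetter → List PLetter → Prop
  | prime (a : ℤ) (w : List PLetter) : OExtra ((a, false) :: w) ((a, true) :: w)
  | comm00 (a b : ℤ) (w : List PLetter) :
      OExtra ((a, false) :: (b, false) :: w) ((b, false) :: (a, false) :: w)
  | comm01 (a b : ℤ) (w : List PLetter) :
      OExtra ((a, false) :: (b, true) :: w) ((b, false) :: (a, true) :: w)
  | comm10 (a b : ℤ) (w : List PLetter) :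
      OExtra ((a, true) :: (b, false) :: w) ((b, true) :: (a, false) :: w)
  | comm11 (a b : ℤ) (w : List PLetter) :
      OExtra ((a, true) :: (b, true) :: w) ((b, true) :: (a, true) :: w)

/-- Orthogonal Coxeter–Knuth equivalence. -/
def OCKEquiv : List PLetter → List PLetter → Prop :=
  Relation.EqvGen (fun x y => PCKStep x y ∨ OExtra x y)

/-- Increasing shifted tableau with primed entries: removing the primes yields an increasing
shifted tableau. -/
def ShIncrTabP (T : List (List PLetter)) : Prop := ShIncrTab (T.map unprimeW)

/-- Decreasing shifted tableau with primed entries. -/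
def ShDecrTabP (T : List (List PLetter)) : Prop := ShDecrTab (T.map unprimeW)

/-- No primed entries on the main diagonal (the first entry of each row). -/
def DiagUnprimed (T : List (List PLetter)) : Prop :=
  ∀ r ∈ T, ∀ p : PLetter, r.head? = some p → p.2 = false

/-- The row reading word of a primed shifted tableau. -/
def rowwordP (T : List (List PLetter)) : List PLetter := T.reverse.flatten

/-- The shape of a primed tableau. -/
def shapeOfP (T : List (List PLetter)) : List ℕ := T.map List.length

/-! ### Iterated partial operators -/

def iterOpt {α : Type*} (g : α → Option α) : ℕ → α → Option α
  | 0, a => some a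
  | m + 1, a => (g a).bind (iterOpt g m)

/-! ### Weak compositions as functions `ℤ → ℕ` supported on positive integers -/

/-- A weak composition: nonnegative entries indexed by positive integers, finitely supported. -/
def WeakCompF (α : ℤ → ℕ) : Prop :=
  (∀ i ≤ 0, α i = 0) ∧ ∃ N : ℤ, ∀ i, N ≤ i → α i = 0

/-- A partition: a weakly decreasing weak composition. -/
def IsPartitionFun (lam : ℤ → ℕ) : Prop :=
  WeakCompF lam ∧ ∀ i : ℤ, 1 ≤ i → lam (i + 1) ≤ lam i

/-- `lam` is the decreasing rearrangement `λ(α)` of `α`: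
it is a partition with the same part multiplicities. -/
def IsDecRearr (α lam : ℤ → ℕ) : Prop :=
  IsPartitionFun lam ∧ ∀ k : ℕ, 0 < k →
    {i : ℤ | 1 ≤ i ∧ k ≤ α i}.ncard = {i : ℤ | 1 ≤ i ∧ k ≤ lam i}.ncard

/-- The Young diagram of a partition function (1-indexed positions). -/
def YDiag (lam : ℤ → ℕ) : Set (ℤ × ℤ) :=
  {p | 1 ≤ p.1 ∧ 1 ≤ p.2 ∧ p.2 ≤ (lam p.1 : ℤ)}

/-- Symmetric partition: diagram invariant under transposition. -/
def SymmPartF (lam : ℤ → ℕ) : Prop :=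
  IsPartitionFun lam ∧ ∀ p : ℤ × ℤ, p ∈ YDiag lam ↔ (p.2, p.1) ∈ YDiag lam

/-- Skew-symmetric partition. -/
def SkewSymmPartF (lam : ℤ → ℕ) : Prop :=
  SymmPartF lam ∧ ∀ i : ℤ, (i, i) ∈ YDiag lam → (i + 1, i + 1) ∉ YDiag lam →
    (¬ ∃ mu : ℤ → ℕ, IsPartitionFun mu ∧ YDiag mu = YDiag lam ∪ {(i, i + 1)} ∧
        YDiag mu ≠ YDiag lam) ∧
    (¬ ∃ mu : ℤ → ℕ, IsPartitionFun mu ∧ YDiag mu = YDiag lam \ {(i, i + 1)} ∧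
        YDiag mu ≠ YDiag lam)

/-- The Demazure action of a simple transposition on weak compositions:
sort the entries in positions `i, i+1` into weakly increasing order. -/
def sComp (i : ℤ) (β : ℤ → ℕ) : ℤ → ℕ :=
  if β (i + 1) < β i then
    (fun j => if j = i then β (i + 1) else if j = i + 1 then β i else β j)
  else β

/-- The Demazure action of a word on a weak composition (rightmost letter acts first). -/
def demCompAct (l : List ℤ) (β : ℤ → ℕ) : ℤ → ℕ := l.foldr sComp β

/-- `u = u(α)`: the minimal-length permutation with `α = u ∘ λ(α)` under the Demazure action. -/
def IsUofAlpha (α lam : ℤ → ℕ) (u : Equiv.Perm ℤ) : Prop :=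
  u ∈ SinftySet ∧ (∃ l : List ℤ, IsReducedWord u l ∧ demCompAct l lam = α) ∧
  ∀ v ∈ SinftySet, (∃ l : List ℤ, IsReducedWord v l ∧ demCompAct l lam = α) → lenOf u ≤ lenOf v

/-! ### Isobaric divided differences, Schubert polynomials -/

/-- `g = π_i f`, i.e. `(x_i - x_{i+1}) g = x_i f - x_{i+1} (s_i f)`. -/
def IsPiApply (i : ℤ) (f g : MvPolynomial ℤ ℤ) : Prop :=
  (X i - X (i + 1)) * g = X i * f - X (i + 1) * MvPolynomial.rename (sT i) f

/-- `g = π_{i_1} π_{i_2} ⋯ π_{i_k} f` for the word `l = [i_1, …, i_k]`. -/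
inductive IsPiWord : List ℤ → MvPolynomial ℤ ℤ → MvPolynomial ℤ ℤ → Prop
  | nil (f : MvPolynomial ℤ ℤ) : IsPiWord [] f f
  | cons (i : ℤ) (t : List ℤ) (f h g : MvPolynomial ℤ ℤ) :
      IsPiWord t f h → IsPiApply i h g → IsPiWord (i :: t) f g

/-- The dominant monomial `x^λ = ∏_{k=1}^{M} x_k^{λ_k}`. -/
noncomputable def xpow (lam : ℤ → ℕ) (M : ℕ) : MvPolynomial ℤ ℤ :=
  ∏ k ∈ Finset.range M, (X ((k : ℤ) + 1) : MvPolynomial ℤ ℤ) ^ lam ((k : ℤ) + 1)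

/-- The defining axioms of the family of Schubert polynomials `{𝔖_w}_{w ∈ S_∞}`:
`𝔖_w = x^λ` for `w` dominant of shape `λ`, and
`∂_i 𝔖_w = 𝔖_{w s_i}` whenever `w(i) > w(i+1)` (cleared of denominators). -/
def IsSchubertFamily (Sf : Equiv.Perm ℤ → MvPolynomial ℤ ℤ) : Prop :=
  (∀ w ∈ SinftySet, ∀ lam : ℤ → ℕ, IsPartitionFun lam → RotheD w = YDiag lam →
     ∀ M : ℕ, (∀ i : ℤ, (M : ℤ) < i → lam i = 0) → Sf w = xpow lam M) ∧
  (∀ w ∈ SinftySet, ∀ i : ℤ, 1 ≤ i → w (i + 1) < w i →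
     (X i - X (i + 1)) * Sf (w * sT i) = Sf w - MvPolynomial.rename (sT i) (Sf w))

/-- Substituting `x_m = 0` for all `m > n` in a polynomial. -/
noncomputable def restrictVars (n : ℕ) (g : MvPolynomial ℤ ℤ) : MvPolynomial ℤ ℤ :=
  (MvPolynomial.aeval fun m : ℤ => if m ≤ (n : ℤ) then (X m : MvPolynomial ℤ ℤ) else 0) g

/-! ### Queer crystal operators `ē_1`, `f̄_1`, `σ_i` on symplectic factorizations -/

/-- Insert a letter directly after the first letter of a list. -/
def insertAfterFirst (c : ℤ) : List ℤ → List ℤ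
  | [] => [c]
  | x :: t => x :: c :: t

/-- The operator `ē_1` on symplectic reduced factorizations. -/
def e1barOp (a : ℕ → List ℤ) : Option (ℕ → List ℤ) :=
  match a 1 with
  | [] => none
  | y :: s =>
    if ∀ x ∈ a 0, x < y then
      if Even y then
        some (Function.update (Function.update a 1 s) 0 (y :: a 0))
      else
        some (Function.update (Function.update a 1 s) 0 (insertAfterFirst (y - 2) (a 0)))
    else none

/-- The operator `f̄_1` on symplectic reduced factorizations. -/
def f1barOp (a : ℕ → List ℤ) : Option (ℕ → List ℤ) :=
  match a 0 with
  | [] => none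
  | x :: _ =>
    if ∀ y ∈ a 1, y < x then
      if (x - 1) ∈ a 0 then
        some (Function.update (Function.update a 0 ((a 0).erase (x - 1))) 1 ((x + 1) :: a 1))
      else
        some (Function.update (Function.update a 0 ((a 0).erase x)) 1 (x :: a 1))
    else none

/-- The string-reversing operator `σ` acting on factors `i, i+1` (0-indexed):
apply `f^k` where `k = wt_i - wt_{i+1}` if `k ≥ 0`, and `e^{-k}` otherwise. -/
def sigZ (i : ℕ) (a : ℕ → List ℤ) : Option (ℕ → List ℤ) :=
  if (a (i + 1)).length ≤ (a i).length then
    iterOpt (fZ i) ((a i).length - (a (i + 1)).length) a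
  else
    iterOpt (eZ i) ((a (i + 1)).length - (a i).length) a

/-- The operators `ē_{j+1}` (0-indexed `j`), defined by
`ē_i = σ_{i-1} σ_i ē_{i-1} σ_i σ_{i-1}`. -/
def ebarOp : ℕ → (ℕ → List ℤ) → Option (ℕ → List ℤ)
  | 0 => e1barOp
  | j + 1 => fun a =>
      (sigZ j a).bind fun b => (sigZ (j + 1) b).bind fun c =>
        (ebarOp j c).bind fun d => (sigZ (j + 1) d).bind (sigZ j)

/-- The operators `f̄_{j+1}` (0-indexed `j`). -/
def fbarOp : ℕ → (ℕ → List ℤ) → Option (ℕ → List ℤ)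
  | 0 => f1barOp
  | j + 1 => fun a =>
      (sigZ j a).bind fun b => (sigZ (j + 1) b).bind fun c =>
        (fbarOp j c).bind fun d => (sigZ (j + 1) d).bind (sigZ j)

/-! ### Crystal Demazure operators on symplectic factorizations -/

/-- The crystal Demazure operator `𝔇_i` (paper-indexed `i ∈ [n-1]`) inside the ambient
crystal `RF^Sp_n(z)`:  all `b` with `e_i^m(b) ∈ X` for some `m ∈ ℕ`. -/
def DOpSp (n : ℕ) (z : Equiv.Perm ℤ) (i : ℤ) (Xs : Set (ℕ → List ℤ)) : Set (ℕ → List ℤ) :=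
  {b | b ∈ RFSp n z ∧ ∃ m : ℕ, ∃ b', iterOpt (eZ (i - 1).toNat) m b = some b' ∧ b' ∈ Xs}

/-- `𝔇_{i_1} 𝔇_{i_2} ⋯ 𝔇_{i_k} X` for the word `l = [i_1, …, i_k]`. -/
def DemFoldSp (n : ℕ) (z : Equiv.Perm ℤ) (l : List ℤ) (Xs : Set (ℕ → List ℤ)) :
    Set (ℕ → List ℤ) :=
  l.foldr (fun i Y => DOpSp n z i Y) Xs
/-- `RF_n(w)` for `w ∈ S_∞`: factorizations into strictly decreasing words of positive
integers. -/
def RFposZn (n : ℕ) (w : Equiv.Perm ℤ) : Set (ℕ → List ℤ) :=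
  {a | (∀ i, ZDec (a i)) ∧ (∀ i, ∀ x ∈ a i, 1 ≤ x) ∧ (∀ m, n ≤ m → a m = []) ∧
       IsReducedWord w (concatZ a n)}


/-! If `e_i(a) = 0`, every letter of `a^{i+1}` is paired with a strictly smaller letter of `a^i`.
Hence each letter of `a^{m+1}` dominates a chain of letters `x_1 < ⋯ < x_m < x`, one from each
earlier factor, and positivity of `x_1` gives `x ≥ m + 1`. -/

theorem mem_and_lt_of_findPairZ_eq_some {c b : ℤ} {L r : List ℤ}
    (h : findPairZ c L = (some b, r)) : b ∈ L ∧ b < c := by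
  induction L generalizing r with
  | nil => simp [findPairZ] at h
  | cons y t ih =>
    by_cases hy : y < c
    · simp only [findPairZ, if_pos hy, Prod.mk.injEq, Option.some.injEq] at h
      exact ⟨h.1 ▸ List.mem_cons_self, h.1 ▸ hy⟩
    · simp only [findPairZ, if_neg hy, Prod.mk.injEq] at h
      obtain ⟨hb, hlt⟩ := ih (Prod.ext h.1 rfl)
      exact ⟨List.mem_cons_of_mem _ hb, hlt⟩

theorem findPairZ_snd_subset (c : ℤ) (L : List ℤ) : (findPairZ c L).2 ⊆ L := by
  induction L with
  | nil => simp [findPairZ]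
  | cons y t ih =>
    by_cases hy : y < c
    · simp [findPairZ, if_pos hy]
    · simpa [findPairZ, if_neg hy] using List.cons_subset_cons y ih

theorem mem_and_lt_of_mem_pairsZ {u v : List ℤ} {p : ℤ × ℤ} (hp : p ∈ pairsZ u v) :
    p.1 ∈ u ∧ p.1 < p.2 := by
  let Inv : List (ℤ × ℤ) × List ℤ → Prop := fun st =>
    (∀ p ∈ st.1, p.1 ∈ u ∧ p.1 < p.2) ∧ st.2 ⊆ u
  have key : Inv (pairFoldZ u v.reverse) := by
    refine List.foldlRecOn (motive := Inv) _ _ ⟨by simp, List.Subset.refl u⟩ ?_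
    rintro ⟨acc, rem⟩ ⟨hacc, hrem⟩ c -
    have hr := List.Subset.trans (findPairZ_snd_subset c rem) hrem
    rcases hfind : findPairZ c rem with ⟨_ | b, r⟩
    · simp only [hfind] at hr ⊢
      exact ⟨hacc, hr⟩
    · simp only [hfind] at hr ⊢
      obtain ⟨hb, hbc⟩ := mem_and_lt_of_findPairZ_eq_some hfind
      refine ⟨?_, hr⟩
      intro p hp
      rcases List.mem_cons.mp hp with rfl | hp
      · exact ⟨hrem hb, hbc⟩
      · exact hacc p hp
  exact key.1 p hp

theorem exists_lt_of_eStepZ_eq_none {u v : List ℤ} (h : eStepZ u v = none) {x : ℤ}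
    (hx : x ∈ v) : ∃ b ∈ u, b < x := by
  have hpaired : x ∈ (pairsZ u v).map Prod.snd := by
    unfold eStepZ at h
    split at h
    · rename_i hnil
      simpa using List.filter_eq_nil_iff.mp hnil x hx
    · simp at h
  obtain ⟨p, hp, rfl⟩ := List.mem_map.mp hpaired
  exact ⟨p.1, mem_and_lt_of_mem_pairsZ hp⟩

theorem eStepZ_eq_none_of_eZ_eq_none {i : ℕ} {a : ℕ → List ℤ} (h : eZ i a = none) :
    eStepZ (a i) (a (i + 1)) = none :=
  Option.map_eq_none_iff.mp h

theorem highest_weight_is_bounded_general (n : ℕ) (w : Equiv.Perm ℤ)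
    (a : ℕ → List ℤ) (ha : a ∈ RFposZn n w)
    (he : ∀ i : ℕ, i + 1 < n → eZ i a = none) :
    ∀ m : ℕ, ∀ x ∈ a m, (m : ℤ) + 1 ≤ x := by
  obtain ⟨-, hpos, hempty, -⟩ := ha
  intro m
  induction m with
  | zero => simpa using hpos 0
  | succ k ih =>
    intro x hx
    have hk : k + 1 < n := by
      by_contra! hnk
      simp [hempty _ hnk] at hx
    obtain ⟨b, hb, hbx⟩ :=
      exists_lt_of_eStepZ_eq_none (eStepZ_eq_none_of_eZ_eq_none (he k hk)) hx
    have hb_ge := ih b hb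
    push_cast
    omega

/-- Every `gl_n`-highest weight element of `RF_n(w)` for `w ∈ S_∞` is
bounded by the standard flag: each letter `x` of the factor in (0-indexed) position `m`
satisfies `x ≥ m + 1` — i.e. belongs to `BRF_n(w)`. -/
theorem highest_weight_is_bounded (n : ℕ) (hn : 0 < n) (w : Equiv.Perm ℤ)
    (hw : w ∈ SinftySet) (a : ℕ → List ℤ) (ha : a ∈ RFposZn n w)
    (he : ∀ i : ℕ, i + 1 < n → eZ i a = none) :
    ∀ m : ℕ, ∀ x ∈ a m, (m : ℤ) + 1 ≤ x :=
  highest_weight_is_bounded_general n w a ha he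
end

section
/- Let w be an element of S_infty, let phi be a flag, and let i be in {1,...,n-1}. If a is in BRF_n(w,phi) and e_i(a) is not 0, then e_i(a) is again in BRF_n(w,phi). -/
open MvPolynomial

/-!
Only the factors `i` and `i + 1` change: the largest unpaired letter `x` of the second factor
`v` moves to the first factor `u` as `x + q`, where `x, …, x + q - 1 ∈ u` and `x + q ∉ u`, so
boundedness follows from `φ x ≤ φ (x + q)`. The substance is that the product of the
concatenated word does not change. Since `x` is unpaired, `x - 1 ∉ u`, and the pairing rule
shows that the run `x + 1, …, x + p` of letters of `v` above `x` has `p ≤ q`. Reducedness gives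
`q ≤ p`: otherwise the product of `u` and the letters of `v` above `x` would have a descent at
`x`. With `p = q`, the part `P` of the word strictly between `x + q` (once inserted into `u`)
and `x` in `v` sends `x ↦ x + q` and `x + 1 ↦ x + q + 1`, so `s_{x+q} P = P s_x`.
-/

theorem sT_apply_of_ne {c k : ℤ} (h₁ : k ≠ c) (h₂ : k ≠ c + 1) : sT c k = k :=
  Equiv.swap_apply_of_ne_of_ne h₁ h₂

theorem sT_apply_left (c : ℤ) : sT c c = c + 1 := Equiv.swap_apply_left _ _

theorem sT_apply_right (c : ℤ) : sT c (c + 1) = c := Equiv.swap_apply_right _ _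

theorem sT_mul_sT_mul (c : ℤ) (w : Equiv.Perm ℤ) : sT c * (sT c * w) = w :=
  Equiv.swap_mul_self_mul _ _ _

theorem sT_lt_sT_iff (c p q : ℤ) :
    sT c p < sT c q ↔ (p < q ∧ ¬(p = c ∧ q = c + 1)) ∨ (p = c + 1 ∧ q = c) := by
  simp only [sT, Equiv.swap_apply_def]
  split_ifs <;> omega

theorem wordProd_cons (c : ℤ) (l : List ℤ) : wordProd (c :: l) = sT c * wordProd l := by
  simp [wordProd]

theorem wordProd_append (l₁ l₂ : List ℤ) : wordProd (l₁ ++ l₂) = wordProd l₁ * wordProd l₂ := by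
  simp [wordProd]

/-! ### Evaluating products of decreasing words -/

theorem wordProd_apply_of_forall_ne {l : List ℤ} {m : ℤ} (h : ∀ c ∈ l, m ≠ c ∧ m ≠ c + 1) :
    wordProd l m = m := by
  induction l with
  | nil => rfl
  | cons c t ih =>
    rw [wordProd_cons, Equiv.Perm.mul_apply, ih fun d hd => h d (List.mem_cons_of_mem c hd)]
    exact sT_apply_of_ne (h c List.mem_cons_self).1 (h c List.mem_cons_self).2

theorem exists_wordProd_apply_eq (l : List ℤ) : ∃ k, wordProd l k = k := by
  obtain ⟨M, hM⟩ := l.toFinset.exists_le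
  exact ⟨M + 2, wordProd_apply_of_forall_ne fun c hc => by
    have := hM c (List.mem_toFinset.mpr hc); omega⟩

namespace ZDec

variable {l : List ℤ}

theorem cons_iff {c : ℤ} : ZDec (c :: l) ↔ (∀ y ∈ l, y < c) ∧ ZDec l := List.pairwise_cons

theorem nodup (hl : ZDec l) : l.Nodup := hl.imp ne_of_gt

theorem eq_append_cons_of_mem (hl : ZDec l) {x : ℤ} (hx : x ∈ l) :
    ∃ B C, l = B ++ x :: C ∧ (∀ b ∈ B, x < b) ∧ ∀ c ∈ C, c < x := by
  obtain ⟨B, C, rfl⟩ := List.append_of_mem hx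
  obtain ⟨-, hxC, hBxC⟩ := List.pairwise_append.mp hl
  exact ⟨B, C, rfl, fun b hb => hBxC b hb x List.mem_cons_self,
    fun c hc => List.rel_of_pairwise_cons hxC hc⟩

theorem filter_lt_succ (hl : ZDec l) {x : ℤ} (hx : x ∈ l) :
    l.filter (· < x + 1) = x :: l.filter (· < x) := by
  obtain ⟨B, C, rfl, hB, hC⟩ := hl.eq_append_cons_of_mem hx
  have hB₁ : B.filter (· < x + 1) = [] := List.filter_eq_nil_iff.mpr fun b hb => by
    have := hB b hb; simp; omega
  have hB₀ : B.filter (· < x) = [] := List.filter_eq_nil_iff.mpr fun b hb => by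
    have := hB b hb; simp; omega
  have hC₁ : C.filter (· < x + 1) = C := List.filter_eq_self.mpr fun c hc => by
    have := hC c hc; simp; omega
  have hC₀ : C.filter (· < x) = C := List.filter_eq_self.mpr fun c hc => by simpa using hC c hc
  rw [List.filter_append, List.filter_append, List.filter_cons, List.filter_cons, hB₁, hB₀, hC₁,
    hC₀]
  simp

theorem eq_filter_append_cons (hl : ZDec l) {x : ℤ} (hx : x ∈ l) :
    l = l.filter (x < ·) ++ x :: l.filter (· < x) := by
  obtain ⟨B, C, rfl, hB, hC⟩ := hl.eq_append_cons_of_mem hx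
  have hB₁ : B.filter (x < ·) = B := List.filter_eq_self.mpr fun b hb => by simpa using hB b hb
  have hC₁ : C.filter (x < ·) = [] := List.filter_eq_nil_iff.mpr fun c hc => by
    have := hC c hc; simp; omega
  have hB₀ : B.filter (· < x) = [] := List.filter_eq_nil_iff.mpr fun b hb => by
    have := hB b hb; simp; omega
  have hC₀ : C.filter (· < x) = C := List.filter_eq_self.mpr fun c hc => by simpa using hC c hc
  simp [List.filter_append, hB₁, hB₀, hC₁, hC₀]

end ZDec

theorem wordProd_apply_of_run {l : List ℤ} (hl : ZDec l) {m : ℤ} {k : ℕ}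
    (hrun : ∀ j < k, m + j ∈ l) (htop : m + k ∉ l) (hbot : m - 1 ∉ l) :
    wordProd l m = m + k := by
  induction l generalizing k with
  | nil =>
    cases k with
    | zero => simp [wordProd]
    | succ k => exact absurd (hrun 0 k.succ_pos) List.not_mem_nil
  | cons c t ih =>
    obtain ⟨hct, ht⟩ := ZDec.cons_iff.mp hl
    have hbot' : m - 1 ∉ t := fun h => hbot (List.mem_cons_of_mem c h)
    have hc : c ≠ m + k := fun h => htop (h ▸ List.mem_cons_self)
    rw [wordProd_cons, Equiv.Perm.mul_apply]
    rcases lt_or_gt_of_ne hc with hlt | hgt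
    · cases k with
      | zero =>
        have hcm : c ≠ m - 1 := fun h => hbot (h ▸ List.mem_cons_self)
        rw [wordProd_apply_of_forall_ne fun d hd => by have := hct d hd; omega]
        simpa using sT_apply_of_ne (c := c) (k := m) (by omega) (by omega)
      | succ k =>
        have hck : c = m + k := by
          rcases List.mem_cons.mp (hrun k k.lt_succ_self) with h | h
          · exact h.symm
          · have := hct _ h; push_cast at hlt; omega
        have hrun' : ∀ j < k, m + j ∈ t := fun j hj => by
          rcases List.mem_cons.mp (hrun j (by omega)) with h | h
          · omega
          · exact h
        rw [ih ht hrun' (fun h => by have := hct _ h; omega) hbot', hck, sT_apply_left]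
        push_cast; ring
    · have hrun' : ∀ j < k, m + j ∈ t := fun j hj => by
        rcases List.mem_cons.mp (hrun j hj) with h | h
        · omega
        · exact h
      rw [ih ht hrun' (fun h => htop (List.mem_cons_of_mem c h)) hbot']
      exact sT_apply_of_ne (by omega) (by omega)

theorem wordProd_apply_of_pred_mem {l : List ℤ} (hl : ZDec l) {m : ℤ} (h : m - 1 ∈ l) :
    wordProd l m = m - 1 := by
  induction l with
  | nil => simp at h
  | cons c t ih =>
    obtain ⟨hct, ht⟩ := ZDec.cons_iff.mp hl
    rw [wordProd_cons, Equiv.Perm.mul_apply]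
    rcases List.mem_cons.mp h with rfl | h
    · rw [wordProd_apply_of_forall_ne fun d hd => by have := hct d hd; omega]
      simp only [sT, Equiv.swap_apply_def]
      split_ifs <;> omega
    · have := hct _ h
      rw [ih ht h]
      exact sT_apply_of_ne (by omega) (by omega)

/-! ### Inversions and reduced words -/

noncomputable def invCount (w : Equiv.Perm ℤ) : ℕ := (InvSet w).ncard

theorem invSet_sT_mul_of_lt {w : Equiv.Perm ℤ} {c : ℤ} (h : w⁻¹ c < w⁻¹ (c + 1)) :
    InvSet (sT c * w) = insert (w⁻¹ c, w⁻¹ (c + 1)) (InvSet w) := by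
  ext ⟨a, b⟩
  simp only [InvSet, Set.mem_insert_iff, Prod.mk.injEq, Equiv.Perm.mul_apply,
    sT_lt_sT_iff, Equiv.Perm.eq_inv_iff_eq]
  constructor
  · rintro ⟨hab, ⟨hw, -⟩ | ⟨hb, ha⟩⟩
    · exact Or.inr ⟨hab, hw⟩
    · exact Or.inl ⟨ha, hb⟩
  · rintro (⟨ha, hb⟩ | ⟨hab, hw⟩)
    · rw [← Equiv.Perm.eq_inv_iff_eq] at ha hb
      subst ha hb
      exact ⟨h, Or.inr (by simp)⟩
    · refine ⟨hab, Or.inl ⟨hw, ?_⟩⟩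
      rintro ⟨hb, ha⟩
      rw [← Equiv.Perm.eq_inv_iff_eq] at ha hb
      subst ha hb
      exact absurd hab h.not_gt

theorem invSet_sT_mul_of_gt {w : Equiv.Perm ℤ} {c : ℤ} (h : w⁻¹ (c + 1) < w⁻¹ c) :
    InvSet w = insert (w⁻¹ (c + 1), w⁻¹ c) (InvSet (sT c * w)) := by
  have hinv : ∀ k, (sT c * w)⁻¹ k = w⁻¹ (sT c k) := fun k => by
    rw [mul_inv_rev, Equiv.Perm.mul_apply, sT, Equiv.swap_inv]
  have h' : (sT c * w)⁻¹ c < (sT c * w)⁻¹ (c + 1) := by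
    rwa [hinv, hinv, sT_apply_left, sT_apply_right]
  have := invSet_sT_mul_of_lt h'
  rwa [sT_mul_sT_mul, hinv, hinv, sT_apply_left, sT_apply_right] at this

theorem notMem_invSet_of_lt {w : Equiv.Perm ℤ} {a b : ℤ} (h : w a < w b) : (a, b) ∉ InvSet w :=
  fun hab => absurd h hab.2.not_gt

theorem invSet_one : InvSet 1 = ∅ :=
  Set.eq_empty_of_forall_notMem fun _ hp => lt_asymm hp.1 hp.2

theorem invSet_wordProd_finite (l : List ℤ) : (InvSet (wordProd l)).Finite := by
  induction l with
  | nil => exact invSet_one ▸ Set.finite_empty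
  | cons c t ih =>
    rw [wordProd_cons]
    rcases lt_or_gt_of_ne ((wordProd t)⁻¹.injective.ne (by omega : c ≠ c + 1)) with h | h
    · rw [invSet_sT_mul_of_lt h]; exact ih.insert _
    · exact ih.subset fun p hp => (invSet_sT_mul_of_gt h).symm ▸ Set.mem_insert_of_mem _ hp

theorem invCount_sT_mul_of_lt {w : Equiv.Perm ℤ} (hw : (InvSet w).Finite) {c : ℤ}
    (h : w⁻¹ c < w⁻¹ (c + 1)) : invCount (sT c * w) = invCount w + 1 := by
  have hnew : (w⁻¹ c, w⁻¹ (c + 1)) ∉ InvSet w := notMem_invSet_of_lt (by simp)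
  rw [invCount, invCount, invSet_sT_mul_of_lt h, Set.ncard_insert_of_notMem hnew hw]

theorem invCount_sT_mul_of_gt {w : Equiv.Perm ℤ} (hw : (InvSet w).Finite) {c : ℤ}
    (h : w⁻¹ (c + 1) < w⁻¹ c) : invCount (sT c * w) + 1 = invCount w := by
  have hs := invSet_sT_mul_of_gt h
  have hfin : (InvSet (sT c * w)).Finite := hw.subset fun p hp => hs ▸ Set.mem_insert_of_mem _ hp
  have hnew : (w⁻¹ (c + 1), w⁻¹ c) ∉ InvSet (sT c * w) :=
    notMem_invSet_of_lt (by simp [sT_apply_left, sT_apply_right])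
  rw [invCount, invCount, hs, Set.ncard_insert_of_notMem hnew hfin]

theorem invSet_inv (w : Equiv.Perm ℤ) :
    InvSet w⁻¹ = (fun p : ℤ × ℤ => (w p.2, w p.1)) '' InvSet w := by
  ext ⟨a, b⟩
  constructor
  · rintro ⟨hab, hw⟩
    exact ⟨(w⁻¹ b, w⁻¹ a), ⟨hw, by simpa using hab⟩, by simp⟩
  · rintro ⟨⟨a', b'⟩, ⟨hab, hw⟩, he⟩
    simp only [Prod.mk.injEq] at he
    obtain ⟨rfl, rfl⟩ := he
    exact ⟨hw, by simpa using hab⟩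

theorem invCount_inv (w : Equiv.Perm ℤ) : invCount w⁻¹ = invCount w := by
  rw [invCount, invSet_inv, Set.ncard_image_of_injective]
  · rfl
  · rintro ⟨a, b⟩ ⟨c, d⟩ h
    simp only [Prod.mk.injEq] at h
    exact Prod.ext (w.injective h.2) (w.injective h.1)

theorem invCount_wordProd_le (l : List ℤ) : invCount (wordProd l) ≤ l.length := by
  induction l with
  | nil => simp [invCount, wordProd, invSet_one]
  | cons c t ih =>
    rw [wordProd_cons, List.length_cons]
    rcases lt_or_gt_of_ne ((wordProd t)⁻¹.injective.ne (by omega : c ≠ c + 1)) with h | h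
    · rw [invCount_sT_mul_of_lt (invSet_wordProd_finite t) h]; omega
    · have := invCount_sT_mul_of_gt (invSet_wordProd_finite t) h; omega

theorem eq_one_of_strictMono {w : Equiv.Perm ℤ} (hw : StrictMono w) {k : ℤ} (hk : w k = k) :
    w = 1 := by
  have hsucc : ∀ a, w (a + 1) = w a + 1 := fun a => by
    by_contra hne
    have hlt : w a + 1 < w (a + 1) := by have := hw (lt_add_one a); omega
    obtain ⟨b, hb⟩ := w.surjective (w a + 1)
    have h₁ : a < b := hw.lt_iff_lt.mp (by omega)
    have h₂ : b < a + 1 := hw.lt_iff_lt.mp (by omega)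
    omega
  ext a
  simp only [Equiv.Perm.one_apply]
  induction a using Int.inductionOn' (b := k) with
  | zero => exact hk
  | succ a _ ih => rw [hsucc, ih]
  | pred a _ ih => have := hsucc (a - 1); rw [sub_add_cancel] at this; omega

theorem exists_wordProd_eq_length_eq_invCount (l : List ℤ) :
    ∃ l' : List ℤ, wordProd l' = wordProd l ∧ l'.length = invCount (wordProd l) := by
  induction hN : invCount (wordProd l) using Nat.strong_induction_on generalizing l with
  | _ N ih =>
    by_cases hdesc : ∃ c, (wordProd l)⁻¹ (c + 1) < (wordProd l)⁻¹ c
    · obtain ⟨c, hc⟩ := hdesc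
      have hcount := invCount_sT_mul_of_gt (invSet_wordProd_finite l) hc
      obtain ⟨l', hl', hlen⟩ := ih (N - 1) (by omega) (c :: l) (by rw [wordProd_cons]; omega)
      refine ⟨c :: l', ?_, by simp [hlen]; omega⟩
      rw [wordProd_cons, hl', wordProd_cons, sT_mul_sT_mul]
    · push Not at hdesc
      obtain ⟨k, hk⟩ := exists_wordProd_apply_eq l
      have hmono : StrictMono ⇑(wordProd l)⁻¹ := strictMono_int_of_lt_succ fun c =>
        lt_of_le_of_ne (hdesc c) ((wordProd l)⁻¹.injective.ne (by omega))
      have hone := eq_one_of_strictMono hmono (by rw [Equiv.Perm.inv_eq_iff_eq, hk])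
      rw [inv_eq_one] at hone
      refine ⟨[], by rw [hone]; rfl, ?_⟩
      rw [← hN, hone, invCount, invSet_one, Set.ncard_empty, List.length_nil]

theorem IsReducedWord.infix {w : Equiv.Perm ℤ} {l₁ m l₂ : List ℤ}
    (h : IsReducedWord w (l₁ ++ m ++ l₂)) : IsReducedWord (wordProd m) m := by
  refine ⟨rfl, fun m' hm' => ?_⟩
  have := h.2 (l₁ ++ m' ++ l₂) (by rw [← h.1, wordProd_append, wordProd_append, hm',
    ← wordProd_append, ← wordProd_append])
  simpa using this

theorem IsReducedWord.replace_infix {w : Equiv.Perm ℤ} {l₁ m m' l₂ : List ℤ}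
    (h : IsReducedWord w (l₁ ++ m ++ l₂)) (hprod : wordProd m' = wordProd m)
    (hlen : m'.length = m.length) : IsReducedWord w (l₁ ++ m' ++ l₂) := by
  refine ⟨by rw [← h.1, wordProd_append, wordProd_append, hprod, ← wordProd_append,
    ← wordProd_append], fun l hl => ?_⟩
  have := h.2 l hl
  simp only [List.length_append] at this ⊢
  omega

theorem IsReducedWord.apply_lt_of_append_singleton {w : Equiv.Perm ℤ} {m : List ℤ} {c : ℤ}
    (h : IsReducedWord w (m ++ [c])) : wordProd m c < wordProd m (c + 1) := by
  by_contra hge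
  have hgt : (wordProd m)⁻¹⁻¹ (c + 1) < (wordProd m)⁻¹⁻¹ c := by
    rw [inv_inv]; exact lt_of_le_of_ne (not_lt.mp hge) ((wordProd m).injective.ne (by omega))
  have hfin : (InvSet (wordProd m)⁻¹).Finite := by
    rw [invSet_inv]; exact (invSet_wordProd_finite m).image _
  have hcount := invCount_sT_mul_of_gt hfin hgt
  have hprod : (sT c * (wordProd m)⁻¹)⁻¹ = wordProd (m ++ [c]) := by
    simp [wordProd, sT]
  have hdrop : invCount (wordProd (m ++ [c])) + 1 = invCount (wordProd m) := by
    rw [← hprod, invCount_inv, hcount, invCount_inv]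
  obtain ⟨l', hl', hlen⟩ := exists_wordProd_eq_length_eq_invCount (m ++ [c])
  have := h.2 l' (by rw [hl', h.1])
  have := invCount_wordProd_le m
  simp only [List.length_append, List.length_singleton] at *
  omega

/-! ### The pairing scan -/

theorem findPairZ_spec (c : ℤ) (l : List ℤ) :
    (findPairZ c l = (none, l) ∧ ∀ b ∈ l, c ≤ b) ∨
      ∃ b ∈ l, b < c ∧ findPairZ c l = (some b, l.erase b) := by
  induction l with
  | nil => exact Or.inl ⟨rfl, by simp⟩
  | cons b t ih =>
    by_cases hb : b < c
    · exact Or.inr ⟨b, List.mem_cons_self, hb, by simp [findPairZ, hb]⟩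
    rcases ih with ⟨ht, hge⟩ | ⟨b', hb't, hb'c, ht⟩
    · refine Or.inl ⟨by simp [findPairZ, hb, ht], ?_⟩
      simpa [not_lt.mp hb] using hge
    · refine Or.inr ⟨b', List.mem_cons_of_mem b hb't, hb'c, ?_⟩
      have hne : b ≠ b' := by omega
      simp [findPairZ, hb, ht, hne]

def pairStep (st : List (ℤ × ℤ) × List ℤ) (c : ℤ) : List (ℤ × ℤ) × List ℤ :=
  match findPairZ c st.2 with
  | (none, r) => (st.1, r)
  | (some b, r) => ((b, c) :: st.1, r)

theorem pairStep_spec (st : List (ℤ × ℤ) × List ℤ) (c : ℤ) :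
    (pairStep st c = st ∧ ∀ b ∈ st.2, c ≤ b) ∨
      ∃ b ∈ st.2, b < c ∧ pairStep st c = ((b, c) :: st.1, st.2.erase b) := by
  rcases findPairZ_spec c st.2 with ⟨h, hge⟩ | ⟨b, hb, hbc, h⟩
  · exact Or.inl ⟨by simp [pairStep, h], hge⟩
  · exact Or.inr ⟨b, hb, hbc, by simp [pairStep, h]⟩

def scanFrom (st : List (ℤ × ℤ) × List ℤ) (l : List ℤ) : List (ℤ × ℤ) × List ℤ :=
  l.foldr (fun c s => pairStep s c) st

theorem pairsZ_eq_scanFrom (u v : List ℤ) : pairsZ u v = (scanFrom ([], u) v).1 := by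
  rw [pairsZ, pairFoldZ, List.foldl_reverse]
  rfl

section scanFrom

variable {st : List (ℤ × ℤ) × List ℤ} {l : List ℤ}

theorem scanFrom_cons (c : ℤ) : scanFrom st (c :: l) = pairStep (scanFrom st l) c := rfl

theorem scanFrom_append (l' : List ℤ) : scanFrom st (l' ++ l) = scanFrom (scanFrom st l) l' :=
  List.foldr_append

theorem scanFrom_snd_sublist : (scanFrom st l).2.Sublist st.2 := by
  induction l with
  | nil => exact List.Sublist.refl _
  | cons c t ih =>
    rw [scanFrom_cons]
    rcases pairStep_spec (scanFrom st t) c with ⟨h, -⟩ | ⟨b, -, -, h⟩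
    · rwa [h]
    · rw [h]; exact (List.erase_sublist).trans ih

theorem mem_scanFrom_fst_of_mem {p : ℤ × ℤ} (hp : p ∈ st.1) : p ∈ (scanFrom st l).1 := by
  induction l with
  | nil => exact hp
  | cons c t ih =>
    rw [scanFrom_cons]
    rcases pairStep_spec (scanFrom st t) c with ⟨h, -⟩ | ⟨b, -, -, h⟩
    · rwa [h]
    · rw [h]; exact List.mem_cons_of_mem _ ih

theorem mem_scanFrom_fst {p : ℤ × ℤ} (hp : p ∈ (scanFrom st l).1) : p ∈ st.1 ∨ p.2 ∈ l := by
  induction l with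
  | nil => exact Or.inl hp
  | cons c t ih =>
    rw [scanFrom_cons] at hp
    rcases pairStep_spec (scanFrom st t) c with ⟨h, -⟩ | ⟨b, -, -, h⟩
    · rw [h] at hp
      exact (ih hp).imp_right (List.mem_cons_of_mem c)
    · rw [h] at hp
      rcases List.mem_cons.mp hp with rfl | hp
      · exact Or.inr List.mem_cons_self
      · exact (ih hp).imp_right (List.mem_cons_of_mem c)

theorem mem_scanFrom_snd {y : ℤ} (hy : y ∈ st.2) (hl : ∀ c ∈ l, c ≤ y) :
    y ∈ (scanFrom st l).2 := by
  induction l with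
  | nil => exact hy
  | cons c t ih =>
    have ih := ih fun d hd => hl d (List.mem_cons_of_mem c hd)
    rw [scanFrom_cons]
    rcases pairStep_spec (scanFrom st t) c with ⟨h, -⟩ | ⟨b, -, hbc, h⟩
    · rwa [h]
    · rw [h]
      exact (List.mem_erase_of_ne (by have := hl c List.mem_cons_self; omega)).mpr ih

end scanFrom

/-- The letters of `u` still unpaired when the scan of `v`, from its smallest letter upwards,
reaches the letter `c`. -/
def remainingAt (u v : List ℤ) (c : ℤ) : List ℤ := (scanFrom ([], u) (v.filter (· < c))).2

section remainingAt

variable {u v : List ℤ}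

theorem remainingAt_sublist (c : ℤ) : (remainingAt u v c).Sublist u := scanFrom_snd_sublist

theorem mem_remainingAt {y c : ℤ} (hy : y ∈ u) (hc : c ≤ y + 1) : y ∈ remainingAt u v c :=
  mem_scanFrom_snd hy fun d hd => by have := (List.mem_filter.mp hd).2; simp at this; omega

theorem mem_pairsZ_snd_iff (hv : ZDec v) {c : ℤ} (hc : c ∈ v) :
    c ∈ (pairsZ u v).map Prod.snd ↔ ∃ b ∈ remainingAt u v c, b < c := by
  have hscan : pairsZ u v =
      (scanFrom (pairStep (scanFrom ([], u) (v.filter (· < c))) c) (v.filter (c < ·))).1 := by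
    rw [pairsZ_eq_scanFrom, ← scanFrom_cons, ← scanFrom_append, ← hv.eq_filter_append_cons hc]
  rw [hscan, remainingAt]
  rcases pairStep_spec (scanFrom ([], u) (v.filter (· < c))) c with ⟨h, hge⟩ | ⟨b, hb, hbc, h⟩
  · refine iff_of_false ?_ fun ⟨b, hb, hbc⟩ => absurd (hge b hb) (not_le.mpr hbc)
    rw [h]
    intro hmem
    obtain ⟨p, hp, rfl⟩ := List.mem_map.mp hmem
    rcases mem_scanFrom_fst hp with hp | hp
    · rcases mem_scanFrom_fst hp with hp | hp
      · simp at hp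
      · simpa using (List.mem_filter.mp hp).2
    · simpa using (List.mem_filter.mp hp).2
  · refine iff_of_true ?_ ⟨b, hb, hbc⟩
    rw [h]
    exact List.mem_map.mpr ⟨(b, c), mem_scanFrom_fst_of_mem List.mem_cons_self, rfl⟩

theorem remainingAt_succ_ge (hu : u.Nodup) (hv : ZDec v) {c : ℤ} (hc : c ∈ v)
    (h : ∀ y ∈ remainingAt u v c, c - 1 ≤ y) : ∀ y ∈ remainingAt u v (c + 1), c ≤ y := by
  intro y hy
  rw [remainingAt, hv.filter_lt_succ hc, scanFrom_cons] at hy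
  rcases pairStep_spec (scanFrom ([], u) (v.filter (· < c))) c with ⟨hs, hge⟩ | ⟨b, hb, hbc, hs⟩
  · rw [hs] at hy
    exact hge y hy
  · rw [hs] at hy
    have hnd : (remainingAt u v c).Nodup := hu.sublist (remainingAt_sublist c)
    obtain ⟨hyb, hy⟩ := (hnd.mem_erase_iff).mp hy
    have := h b hb
    have := h y hy
    omega

theorem remainingAt_add_ge (hu : u.Nodup) (hv : ZDec v) {m : ℤ} {k : ℕ}
    (h : ∀ y ∈ remainingAt u v m, m - 1 ≤ y) (hrun : ∀ j < k, m + j ∈ v) :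
    ∀ y ∈ remainingAt u v (m + k), m + k - 1 ≤ y := by
  induction k with
  | zero => simpa using h
  | succ k ih =>
    have := remainingAt_succ_ge hu hv (hrun k k.lt_succ_self)
      (by simpa using ih fun j hj => hrun j (by omega))
    intro y hy
    have := this y (by simpa [add_assoc] using hy)
    push_cast
    omega

end remainingAt

/-! ### The raising operator -/

theorem add_qUp_notMem (L : List ℤ) (x : ℤ) : x + qUp L x ∉ L :=
  Nat.find_spec (exists_add_not_mem L x)

theorem add_mem_of_lt_qUp {L : List ℤ} {x : ℤ} {j : ℕ} (hj : j < qUp L x) : x + j ∈ L :=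
  not_not.mp (Nat.find_min (exists_add_not_mem L x) hj)

theorem mem_insertDecZ {p y : ℤ} {l : List ℤ} : y ∈ insertDecZ p l ↔ y = p ∨ y ∈ l := by
  induction l with
  | nil => simp [insertDecZ]
  | cons c t ih =>
    simp only [insertDecZ]
    split_ifs
    · exact List.mem_cons
    · simp only [List.mem_cons, ih]; tauto

theorem length_insertDecZ (p : ℤ) (l : List ℤ) : (insertDecZ p l).length = l.length + 1 := by
  induction l with
  | nil => rfl
  | cons c t ih =>
    simp only [insertDecZ]
    split_ifs <;> simp [ih]

theorem erase_insertDecZ {p : ℤ} {l : List ℤ} (hp : p ∉ l) : (insertDecZ p l).erase p = l := by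
  induction l with
  | nil => simp [insertDecZ]
  | cons c t ih =>
    have hcp : c ≠ p := fun h => hp (h ▸ List.mem_cons_self)
    simp only [insertDecZ]
    split_ifs
    · simp
    · simp [hcp, ih fun h => hp (List.mem_cons_of_mem c h)]

theorem ZDec.insertDecZ {l : List ℤ} (hl : ZDec l) {p : ℤ} (hp : p ∉ l) :
    ZDec (insertDecZ p l) := by
  induction l with
  | nil => exact List.pairwise_singleton _ p
  | cons c t ih =>
    obtain ⟨hct, ht⟩ := ZDec.cons_iff.mp hl
    simp only [_root_.insertDecZ]
    split_ifs with hcp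
    · exact ZDec.cons_iff.mpr ⟨fun y hy => by
        rcases List.mem_cons.mp hy with rfl | hy
        · exact hcp
        · exact (hct y hy).trans hcp, hl⟩
    · have hpc : p < c := lt_of_le_of_ne (not_lt.mp hcp) fun h => hp (h ▸ List.mem_cons_self)
      refine ZDec.cons_iff.mpr ⟨fun y hy => ?_, ih ht fun h => hp (List.mem_cons_of_mem c h)⟩
      rcases mem_insertDecZ.mp hy with rfl | hy
      · exact hpc
      · exact hct y hy

def unpairedZ (u v : List ℤ) : List ℤ :=
  v.filter fun c => decide (c ∉ (pairsZ u v).map Prod.snd)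

theorem eStepZ_eq_some {u v : List ℤ} {uv' : List ℤ × List ℤ} (h : eStepZ u v = some uv') :
    ∃ x rest, unpairedZ u v = x :: rest ∧ uv' = (insertDecZ (x + qUp u x) u, v.erase x) := by
  rw [eStepZ] at h
  split at h
  · cases h
  · rename_i x rest hx
    exact ⟨x, rest, hx, (Option.some.inj h).symm⟩

section unpaired

variable {u v rest : List ℤ} {x : ℤ}

theorem mem_of_unpairedZ_eq_cons (h : unpairedZ u v = x :: rest) :
    x ∈ v ∧ x ∉ (pairsZ u v).map Prod.snd := by
  have hx : x ∈ unpairedZ u v := h ▸ List.mem_cons_self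
  simpa [unpairedZ] using hx

theorem le_of_unpairedZ_eq_cons (hv : ZDec v) (h : unpairedZ u v = x :: rest) {y : ℤ}
    (hy : y ∈ v) (hyu : y ∉ (pairsZ u v).map Prod.snd) : y ≤ x := by
  have hsorted : ZDec (x :: rest) := h ▸ List.Pairwise.filter _ hv
  have hy' : y ∈ x :: rest := h ▸ List.mem_filter.mpr ⟨hy, by simpa using hyu⟩
  rcases List.mem_cons.mp hy' with rfl | hy'
  · exact le_rfl
  · exact (ZDec.cons_iff.mp hsorted).1 y hy' |>.le

theorem pred_notMem_of_unpaired (hv : ZDec v) (hx : x ∈ v)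
    (hxu : x ∉ (pairsZ u v).map Prod.snd) : x - 1 ∉ u := fun h =>
  hxu ((mem_pairsZ_snd_iff hv hx).mpr ⟨x - 1, mem_remainingAt h (by omega), by omega⟩)

/-- If `x + 1, …, x + q + 1` all lay in `v`, the pairing would match `x + 1, …, x + q` with
`x, …, x + q - 1` and leave `x + q + 1` unpaired, although it exceeds the largest unpaired
letter `x`. -/
theorem qUp_succ_le_of_unpairedZ_eq_cons (hu : ZDec u) (hv : ZDec v)
    (h : unpairedZ u v = x :: rest) : qUp v (x + 1) ≤ qUp u x := by
  obtain ⟨hxv, hxu⟩ := mem_of_unpairedZ_eq_cons h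
  set q := qUp u x
  by_contra! hlt
  have hrun : ∀ j < qUp v (x + 1) + 1, x + j ∈ v := fun j hj => by
    rcases j with _ | j
    · simpa using hxv
    · simpa [add_assoc, add_comm (1 : ℤ)] using add_mem_of_lt_qUp (L := v) (x := x + 1)
        (j := j) (by omega)
  have hstart : ∀ y ∈ remainingAt u v x, x - 1 ≤ y := fun y hy => by
    by_contra! hyx
    exact hxu ((mem_pairsZ_snd_iff hv hxv).mpr ⟨y, hy, by omega⟩)
  have hend := remainingAt_add_ge (k := q + 1) hu.nodup hv hstart fun j hj => hrun j (by omega)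
  have htop : x + (q + 1 : ℕ) ∉ (pairsZ u v).map Prod.snd := by
    rw [mem_pairsZ_snd_iff hv (hrun _ (by omega))]
    rintro ⟨b, hb, hbx⟩
    have hbu : b ≠ x + q := fun h => add_qUp_notMem u x (h ▸ (remainingAt_sublist _).subset hb)
    have := hend b hb
    push_cast at this hbx
    omega
  have := le_of_unpairedZ_eq_cons hv h (hrun _ (by omega)) htop
  omega

end unpaired

theorem wordProd_apply_of_eq_append_cons {v V₁ V₂ : List ℤ} (hv : ZDec v) {x : ℤ}
    (hsplit : v = V₁ ++ x :: V₂) (hV₁ : ∀ b ∈ V₁, x < b) (hV₂ : ∀ c ∈ V₂, c < x) :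
    wordProd V₁ x = x ∧ wordProd V₁ (x + 1) = x + 1 + qUp v (x + 1) := by
  have hxV₁ : x ∉ V₁ := fun h => (hV₁ x h).false
  have hV₁v : ∀ y ∈ V₁, y ∈ v := fun y hy => by rw [hsplit]; exact List.mem_append_left _ hy
  refine ⟨wordProd_apply_of_forall_ne fun b hb => by have := hV₁ b hb; omega, ?_⟩
  refine wordProd_apply_of_run ((hsplit ▸ hv).sublist (List.sublist_append_left _ _))
    (fun j hj => ?_) (fun h => add_qUp_notMem v (x + 1) (hV₁v _ h)) (by simpa using hxV₁)
  have hmem := add_mem_of_lt_qUp hj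
  rw [hsplit] at hmem
  rcases List.mem_append.mp hmem with h | h
  · exact h
  · rcases List.mem_cons.mp h with h | h
    · omega
    · have := hV₂ _ h; omega

theorem qUp_le_qUp_succ_of_isReducedWord {w : Equiv.Perm ℤ} {u v : List ℤ} (hu : ZDec u)
    (hv : ZDec v) (hred : IsReducedWord w (u ++ v)) {x : ℤ} (hx : x ∈ v) (hxu : x - 1 ∉ u) :
    qUp u x ≤ qUp v (x + 1) := by
  obtain ⟨V₁, V₂, hsplit, hV₁, hV₂⟩ := hv.eq_append_cons_of_mem hx
  obtain ⟨hV₁x, hV₁x₁⟩ := wordProd_apply_of_eq_append_cons hv hsplit hV₁ hV₂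
  by_contra! hlt
  have hprefix : IsReducedWord (wordProd (u ++ V₁ ++ [x])) (u ++ V₁ ++ [x]) :=
    IsReducedWord.infix (l₁ := []) (l₂ := V₂) (by simpa [hsplit] using hred)
  have hdesc := hprefix.apply_lt_of_append_singleton
  have hux : wordProd u x = x + qUp u x :=
    wordProd_apply_of_run hu (fun j hj => add_mem_of_lt_qUp hj) (add_qUp_notMem u x) hxu
  have hux₁ : wordProd u (x + 1 + qUp v (x + 1)) = x + qUp v (x + 1) := by
    have hmem := add_mem_of_lt_qUp hlt
    rw [wordProd_apply_of_pred_mem hu (by convert hmem using 1; ring)]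
    ring
  rw [wordProd_append, Equiv.Perm.mul_apply, Equiv.Perm.mul_apply, hV₁x, hV₁x₁, hux, hux₁]
    at hdesc
  omega

theorem wordProd_insertDecZ_append_erase {u v : List ℤ} (hu : ZDec u) (hv : ZDec v) {x : ℤ}
    (hx : x ∈ v) (hxu : x - 1 ∉ u) (hq : qUp v (x + 1) = qUp u x) :
    wordProd (insertDecZ (x + qUp u x) u ++ v.erase x) = wordProd (u ++ v) := by
  set q := qUp u x
  obtain ⟨V₁, V₂, hsplit, hV₁, hV₂⟩ := hv.eq_append_cons_of_mem hx
  obtain ⟨hV₁x, hV₁x₁⟩ := wordProd_apply_of_eq_append_cons hv hsplit hV₁ hV₂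
  have hv' : v.erase x = V₁ ++ V₂ := by
    rw [hsplit, List.erase_append_right _ fun h => (hV₁ x h).false]
    simp
  obtain ⟨B, C, hu', hB, hC⟩ := (hu.insertDecZ (add_qUp_notMem u x)).eq_append_cons_of_mem
    (mem_insertDecZ.mpr (Or.inl rfl))
  have hu_eq : u = B ++ C := by
    rw [← erase_insertDecZ (add_qUp_notMem u x), hu',
      List.erase_append_right _ fun h => (hB _ h).false]
    simp
  have hCdec : ZDec C := (hu_eq ▸ hu).sublist (List.sublist_append_right _ _)
  set P := wordProd C * wordProd V₁
  have hPx : P x = x + q := by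
    rw [Equiv.Perm.mul_apply, hV₁x]
    refine wordProd_apply_of_run hCdec (fun j hj => ?_) (fun h => (hC _ h).false)
      fun h => hxu (hu_eq ▸ List.mem_append_right _ h)
    have hmem := add_mem_of_lt_qUp hj
    rw [hu_eq] at hmem
    rcases List.mem_append.mp hmem with h | h
    · have := hB _ h; omega
    · exact h
  have hPx₁ : P (x + 1) = x + q + 1 := by
    rw [Equiv.Perm.mul_apply, hV₁x₁, hq]
    refine (wordProd_apply_of_forall_ne fun c hc => ?_).trans (by ring)
    have := hC c hc
    omega
  have hcomm : sT (x + q) * P = P * sT x := by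
    have hswap := Equiv.swap_apply_apply P x (x + 1)
    rw [hPx, hPx₁] at hswap
    rw [sT, hswap, sT, inv_mul_cancel_right]
  rw [hu', hv']
  conv_rhs => rw [hu_eq, hsplit]
  simp only [wordProd_append, wordProd_cons, List.append_assoc, List.cons_append]
  calc wordProd B * (sT (x + q) * (wordProd C * (wordProd V₁ * wordProd V₂)))
      = wordProd B * ((sT (x + q) * P) * wordProd V₂) := by simp only [P, mul_assoc]
    _ = wordProd B * ((P * sT x) * wordProd V₂) := by rw [hcomm]
    _ = wordProd B * (wordProd C * (wordProd V₁ * (sT x * wordProd V₂))) := by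
      simp only [P, mul_assoc]

theorem wordProd_eStepZ {w : Equiv.Perm ℤ} {u v rest : List ℤ} (hu : ZDec u) (hv : ZDec v)
    (hred : IsReducedWord w (u ++ v)) {x : ℤ} (h : unpairedZ u v = x :: rest) :
    wordProd (insertDecZ (x + qUp u x) u ++ v.erase x) = wordProd (u ++ v) := by
  obtain ⟨hxv, hxu⟩ := mem_of_unpairedZ_eq_cons h
  have hpred := pred_notMem_of_unpaired hv hxv hxu
  exact wordProd_insertDecZ_append_erase hu hv hxv hpred
    (le_antisymm (qUp_succ_le_of_unpairedZ_eq_cons hu hv h)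
      (qUp_le_qUp_succ_of_isReducedWord hu hv hred hxv hpred))

theorem concatZ_update_update (a : ℕ → List ℤ) {i n : ℕ} (hi : i + 1 < n) :
    ∃ pre suf, ∀ u v, concatZ (Function.update (Function.update a i u) (i + 1) v) n =
      pre ++ (u ++ v) ++ suf := by
  refine ⟨concatZ a i, ((List.range (n - (i + 2))).map fun k => a (i + 2 + k)).flatten,
    fun u v => ?_⟩
  have hrange : List.range n = List.range i ++ [i, i + 1] ++
      (List.range (n - (i + 2))).map (i + 2 + ·) := by
    conv_lhs => rw [show n = i + 2 + (n - (i + 2)) by omega, List.range_add]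
    simp [List.range_succ]
  rw [concatZ, hrange, concatZ]
  simp only [List.map_append, List.flatten_append, List.map_map, List.append_assoc]
  congr 1
  · refine congrArg _ (List.map_congr_left fun j hj => ?_)
    have := List.mem_range.mp hj
    simp [show j ≠ i by omega, show j ≠ i + 1 by omega]
  · simp only [List.map_cons, List.map_nil, List.flatten_cons, List.flatten_nil,
      List.append_nil, List.append_assoc]
    simp only [Function.update_apply, show i ≠ i + 1 by omega, if_false]
    congr 2
    refine congrArg _ (List.map_congr_left fun k _ => ?_)
    simp [show i + 2 + k ≠ i by omega, show i + 2 + k ≠ i + 1 by omega]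

theorem eZ_eq_some {i : ℕ} {a b : ℕ → List ℤ} (h : eZ i a = some b) :
    ∃ x rest, unpairedZ (a i) (a (i + 1)) = x :: rest ∧
      b = Function.update (Function.update a i (insertDecZ (x + qUp (a i) x) (a i))) (i + 1)
        ((a (i + 1)).erase x) := by
  obtain ⟨uv, huv, rfl⟩ := Option.map_eq_some_iff.mp h
  obtain ⟨x, rest, hx, rfl⟩ := eStepZ_eq_some huv
  exact ⟨x, rest, hx, rfl⟩

theorem mem_of_eZ_eq_some {i : ℕ} {a b : ℕ → List ℤ} (h : eZ i a = some b) {m : ℕ} {y : ℤ}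
    (hy : y ∈ b m) : y ∈ a m ∨ m = i ∧ ∃ x ∈ a (i + 1), x ≤ y := by
  obtain ⟨x, rest, hx, rfl⟩ := eZ_eq_some h
  simp only [Function.update_apply] at hy
  split_ifs at hy with hm₁ hm₀
  · exact Or.inl (hm₁ ▸ List.erase_subset hy)
  · rcases mem_insertDecZ.mp hy with rfl | hy
    · exact Or.inr ⟨hm₀, x, (mem_of_unpairedZ_eq_cons hx).1, by omega⟩
    · exact Or.inl (hm₀ ▸ hy)
  · exact Or.inl hy

theorem eZ_mem_RFposZn {n : ℕ} {w : Equiv.Perm ℤ} {a b : ℕ → List ℤ} {i : ℕ}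
    (ha : a ∈ RFposZn n w) (hi : i + 1 < n) (h : eZ i a = some b) : b ∈ RFposZn n w := by
  obtain ⟨hdec, hpos, hnil, hred⟩ := ha
  have hpos_b : ∀ m, ∀ y ∈ b m, 1 ≤ y := fun m y hy =>
    (mem_of_eZ_eq_some h hy).elim (hpos m y) fun ⟨_, x, hx, hxy⟩ => (hpos _ x hx).trans hxy
  obtain ⟨x, rest, hx, rfl⟩ := eZ_eq_some h
  refine ⟨fun m => ?_, hpos_b, fun m hm => ?_, ?_⟩
  · simp only [Function.update_apply]
    split_ifs
    · exact (hdec _).sublist (List.erase_sublist)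
    · exact (hdec i).insertDecZ (add_qUp_notMem _ _)
    · exact hdec m
  · rw [Function.update_of_ne (by omega), Function.update_of_ne (by omega)]
    exact hnil m hm
  · obtain ⟨pre, suf, hcat⟩ := concatZ_update_update a hi
    have hcat_a : concatZ a n = pre ++ (a i ++ a (i + 1)) ++ suf := by
      simpa using hcat (a i) (a (i + 1))
    rw [hcat_a] at hred
    have hxv := (mem_of_unpairedZ_eq_cons hx).1
    rw [hcat]
    refine hred.replace_infix (wordProd_eStepZ (hdec i) (hdec (i + 1)) hred.infix hx) ?_
    simp only [List.length_append, length_insertDecZ, List.length_erase_of_mem hxv]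
    have := List.length_pos_of_mem hxv
    omega

theorem eZ_preserves_bounded_general (n : ℕ) (w : Equiv.Perm ℤ)
    (φ : ℤ → ℤ) (hmono : Monotone φ)
    (a : ℕ → List ℤ) (haRF : a ∈ RFposZn n w)
    (hbd : ∀ m : ℕ, ∀ x ∈ a m, (m : ℤ) + 1 ≤ φ x)
    (i : ℕ) (hi : i + 1 < n) (b : ℕ → List ℤ) (hab : eZ i a = some b) :
    b ∈ RFposZn n w ∧ ∀ m : ℕ, ∀ x ∈ b m, (m : ℤ) + 1 ≤ φ x := by
  refine ⟨eZ_mem_RFposZn haRF hi hab, fun m y hy => ?_⟩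
  rcases mem_of_eZ_eq_some hab hy with hy | ⟨rfl, x, hx, hxy⟩
  · exact hbd m y hy
  · have hx := hbd (m + 1) x hx
    push_cast at hx
    linarith [hmono hxy]

/-- For a flag `φ` and `a ∈ BRF_n(w, φ)`, if `e_i(a) ≠ 0` for some
`i ∈ {1, …, n-1}` then `e_i(a) ∈ BRF_n(w, φ)`.  (Bounded by `φ` means every letter `x` of
the factor in 0-indexed position `m` satisfies `m + 1 ≤ φ(x)`.) -/
theorem eZ_preserves_bounded (n : ℕ) (hn : 0 < n) (w : Equiv.Perm ℤ) (hw : w ∈ SinftySet)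
    (φ : ℤ → ℤ) (hmono : Monotone φ) (hflag : ∀ m : ℤ, 1 ≤ m → m ≤ φ m)
    (a : ℕ → List ℤ) (haRF : a ∈ RFposZn n w)
    (hbd : ∀ m : ℕ, ∀ x ∈ a m, (m : ℤ) + 1 ≤ φ x)
    (i : ℕ) (hi : i + 1 < n) (b : ℕ → List ℤ) (hab : eZ i a = some b) :
    b ∈ RFposZn n w ∧ ∀ m : ℕ, ∀ x ∈ b m, (m : ℤ) + 1 ≤ φ x :=
  eZ_preserves_bounded_general n w φ hmono a haRF hbd i hi b hab
end

section
/- Let B be a gl_n-crystal (a set with weight function wt taking values in N^n and crystal operators e_i for i in {1,...,n-1} satisfying wt(e_i b) = wt(b) + e_i - e_{i+1} whenever e_i b is nonzero, where e_i denotes the i-th standard basis vector). For a subset X of B and 0 <= k <= n, define R_k X := { b in X : wt(b)_i = 0 for all k < i <= n }, and for i in {1,...,n-1} define the crystal Demazure operator D_i X := { b in B : e_i^m(b) lies in X for some m in N }. Then for every i in {1,...,n-1}: if i < k then R_k(D_i X) = D_i(R_k X), and if i >= k then R_k(D_i X) = R_k X. -/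
open MvPolynomial

/-- `R_k X = {b ∈ X : wt(b)_i = 0 for all k < i ≤ n}`. -/
def RkSet {B : Type*} (n : ℕ) (wt : B → ℕ → ℕ) (k : ℕ) (Xs : Set B) : Set B :=
  {b | b ∈ Xs ∧ ∀ j : ℕ, k < j → j ≤ n → wt b j = 0}

/-- The crystal Demazure operator `𝔇_i X = {b : e_i^m(b) ∈ X for some m ∈ ℕ}`. -/
def DiSet {B : Type*} (e : ℕ → B → Option B) (i : ℕ) (Xs : Set B) : Set B :=
  {b | ∃ m : ℕ, ∃ b', iterOpt (e i) m b = some b' ∧ b' ∈ Xs}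

section iterOpt

variable {α β : Type*} {g : α → Option α}

theorem iterOpt_invariant {f : α → β} (hf : ∀ a a', g a = some a' → f a' = f a) :
    ∀ (m : ℕ) (a a' : α), iterOpt g m a = some a' → f a' = f a
  | 0, a, a', h => by rw [Option.some_inj.mp h]
  | m + 1, a, a', h => by
    obtain ⟨c, hc, hca'⟩ := Option.bind_eq_some_iff.mp h
    rw [iterOpt_invariant hf m c a' hca', hf a c hc]

theorem eq_of_iterOpt_eq_some_of_eq_none {a a' : α} (hg : g a = none) :
    ∀ m : ℕ, iterOpt g m a = some a' → a' = a
  | 0, h => (Option.some_inj.mp h).symm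
  | m + 1, h => by simp [iterOpt, hg] at h

end iterOpt

section Demazure

variable {B : Type*} {n k i : ℕ} {wt : B → ℕ → ℕ} {e : ℕ → B → Option B}

/-- Away from `i` and `i + 1` the weight is constant along `i`-strings, and the conditions
cutting out `R_k` only look at coordinates `j > k > i`. -/
theorem RkSet_DiSet_of_lt
    (hwt : ∀ b b', e i b = some b' → ∀ j, j ≠ i → j ≠ i + 1 → wt b' j = wt b j)
    (hik : i < k) (Xs : Set B) :
    RkSet n wt k (DiSet e i Xs) = DiSet e i (RkSet n wt k Xs) := by
  have wt_eq {m b b'} (h : iterOpt (e i) m b = some b') {j} (hj : k < j) : wt b' j = wt b j :=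
    iterOpt_invariant (f := fun b => wt b j)
      (fun b b' hb => hwt b b' hb j (by omega) (by omega)) m b b' h
  ext b
  constructor
  · rintro ⟨⟨m, b', hb', hb'X⟩, hb⟩
    exact ⟨m, b', hb', hb'X, fun j hkj hjn => (wt_eq hb' hkj).trans (hb j hkj hjn)⟩
  · rintro ⟨m, b', hb', hb'X, hb'k⟩
    exact ⟨⟨m, b', hb', hb'X⟩, fun j hkj hjn => (wt_eq hb' hkj).symm.trans (hb'k j hkj hjn)⟩

/-- On `R_k` with `k ≤ i` the coordinate `i + 1` of the weight vanishes, so `e_i`,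
which lowers it by one, is undefined there. -/
theorem RkSet_DiSet_of_le
    (hwt : ∀ b b', e i b = some b' → wt b (i + 1) = wt b' (i + 1) + 1)
    (hki : k ≤ i) (hin : i < n) (Xs : Set B) :
    RkSet n wt k (DiSet e i Xs) = RkSet n wt k Xs := by
  ext b
  constructor
  · rintro ⟨⟨m, b', hb', hb'X⟩, hb⟩
    have he : e i b = none := by
      refine Option.eq_none_iff_forall_ne_some.mpr fun c hc => ?_
      have := hwt b c hc
      have := hb (i + 1) (by omega) (by omega)
      omega
    obtain rfl := eq_of_iterOpt_eq_some_of_eq_none he m hb'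
    exact ⟨hb'X, hb⟩
  · rintro ⟨hbX, hb⟩
    exact ⟨⟨0, b, rfl, hbX⟩, hb⟩

end Demazure

theorem Rk_DemazureOp_general {B : Type*} (n : ℕ)
    (wt : B → ℕ → ℕ) (e : ℕ → B → Option B)
    (hwt : ∀ i : ℕ, 1 ≤ i → i < n → ∀ b b' : B, e i b = some b' →
      wt b' i = wt b i + 1 ∧ wt b (i + 1) = wt b' (i + 1) + 1 ∧
      ∀ j : ℕ, j ≠ i → j ≠ i + 1 → wt b' j = wt b j)
    (Xs : Set B) (k : ℕ) (i : ℕ) (hi1 : 1 ≤ i) (hi2 : i < n) :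
    (i < k → RkSet n wt k (DiSet e i Xs) = DiSet e i (RkSet n wt k Xs)) ∧
    (k ≤ i → RkSet n wt k (DiSet e i Xs) = RkSet n wt k Xs) :=
  ⟨fun hik => RkSet_DiSet_of_lt (fun b b' h => (hwt i hi1 hi2 b b' h).2.2) hik Xs,
    fun hki => RkSet_DiSet_of_le (fun b b' h => (hwt i hi1 hi2 b b' h).2.1) hki hi2 Xs⟩

/-- In a `gl_n`-crystal, for `0 ≤ k ≤ n` and `i ∈ {1, …, n-1}`:
`R_k 𝔇_i X = 𝔇_i R_k X` if `i < k`, and `R_k 𝔇_i X = R_k X` if `i ≥ k`. -/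
theorem Rk_DemazureOp {B : Type*} (n : ℕ) (hn : 0 < n)
    (wt : B → ℕ → ℕ) (e : ℕ → B → Option B)
    (hwt : ∀ i : ℕ, 1 ≤ i → i < n → ∀ b b' : B, e i b = some b' →
      wt b' i = wt b i + 1 ∧ wt b (i + 1) = wt b' (i + 1) + 1 ∧
      ∀ j : ℕ, j ≠ i → j ≠ i + 1 → wt b' j = wt b j)
    (Xs : Set B) (k : ℕ) (hk : k ≤ n) (i : ℕ) (hi1 : 1 ≤ i) (hi2 : i < n) :
    (i < k → RkSet n wt k (DiSet e i Xs) = DiSet e i (RkSet n wt k Xs)) ∧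
    (k ≤ i → RkSet n wt k (DiSet e i Xs) = RkSet n wt k Xs) :=
  Rk_DemazureOp_general n wt e hwt Xs k i hi1 hi2
end
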